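/- arXiv:2004.05943 — 10 statements merged into one kernel-verified Lean document; each statement's English description precedes it below -/
import Mathlib

section
/- A function f : ℕ → ℕ is congruence preserving on ⟨ℕ;+⟩ if and only if both of the following hold: (i) for all x, y ∈ ℕ, the integer x − y divides f(x) − f(y) (divisibility in ℤ, using the canonical embedding of ℕ into ℤ); and (ii) either f is constant, or f(x) ≥ x for all x ∈ ℕ. -/
/-- `r` is an additive congruence on ℕ: an equivalence relation compatible with `+`. -/
def IsAddCongN (r : ℕ → ℕ → Prop) : Prop :=
  Equivalence r ∧ ∀ x y x' y', r x y → r x' y' → r (x + x') (y + y')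

/-- `f` is congruence preserving on ⟨ℕ;+⟩. -/
def CongPresN (f : ℕ → ℕ) : Prop :=
  ∀ r : ℕ → ℕ → Prop, IsAddCongN r → ∀ x y, r x y → r (f x) (f y)

theorem stmt0 (f : ℕ → ℕ) :
    CongPresN f ↔
      ((∀ x y : ℕ, (x : ℤ) - (y : ℤ) ∣ (f x : ℤ) - (f y : ℤ)) ∧
        ((∃ c, ∀ x, f x = c) ∨ ∀ x, f x ≥ x)) := by
  constructor
  · intro hf
    have hdvd : ∀ x y : ℕ, (x : ℤ) - (y : ℤ) ∣ (f x : ℤ) - (f y : ℤ) := by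
      intro x y
      set D : ℤ := (x : ℤ) - y with hD
      have hr : IsAddCongN (fun a b => D ∣ (a : ℤ) - b) := by
        refine ⟨⟨fun a => by simp, fun {a b} h => ?_, fun {a b c} h1 h2 => ?_⟩,
          fun a b a' b' h1 h2 => ?_⟩
        · have := dvd_neg.mpr h; simpa using this
        · have := dvd_add h1 h2
          have e : ((a:ℤ) - b) + ((b:ℤ) - c) = (a:ℤ) - c := by ring
          rwa [e] at this
        · have := dvd_add h1 h2
          have e : ((a:ℤ) - b) + ((a':ℤ) - b') = ((a + a' : ℕ) : ℤ) - ((b + b' : ℕ) : ℤ) := by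
            push_cast; ring
          rwa [e] at this
      exact hf _ hr x y dvd_rfl
    refine ⟨hdvd, ?_⟩
    by_cases hg : ∀ x, f x ≥ x
    · exact Or.inr hg
    · left
      push_neg at hg
      obtain ⟨x, hx⟩ := hg
      set n : ℕ := f x + 1 with hn
      have hxn : n ≤ x := by omega
      -- threshold congruence
      have hr : IsAddCongN (fun a b => a = b ∨ (n ≤ a ∧ n ≤ b)) := by
        refine ⟨⟨fun a => Or.inl rfl, fun {a b} h => ?_, fun {a b c} h1 h2 => ?_⟩,
          fun a b a' b' h1 h2 => ?_⟩
        · omega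
        · omega
        · omega
      have hev : ∀ y, n ≤ y → f y = f x := by
        intro y hy
        have := hf _ hr x y (Or.inr ⟨hxn, hy⟩)
        rcases this with h | h
        · omega
        · omega
      refine ⟨f x, fun z => ?_⟩
      set y : ℕ := n + z + f z + f x with hy
      have hfy : f y = f x := hev y (by omega)
      have hd := hdvd y z
      rw [hfy] at hd
      by_contra hne
      have hpos : (0:ℤ) < (f x : ℤ) - f z ∨ (0:ℤ) < (f z : ℤ) - f x := by
        have : f z ≠ f x := fun h => hne h
        rcases Nat.lt_or_ge (f z) (f x) with h | h
        · left; push_cast; omega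
        · right; push_cast
          have : f z ≠ f x := fun h => hne h
          omega
      have hyz : (y:ℤ) - z = n + f z + f x := by simp only [hy]; push_cast; ring
      rcases hpos with h | h
      · have := Int.le_of_dvd h hd
        rw [hyz] at this
        have hn0 : (0:ℤ) ≤ n := by positivity
        omega
      · have hd' : (y:ℤ) - z ∣ (f z : ℤ) - f x := by
          have := dvd_neg.mpr hd; simpa using this
        have := Int.le_of_dvd h hd'
        rw [hyz] at this
        have hn0 : (0:ℤ) ≤ n := by positivity
        omega
  · rintro ⟨hdvd, hcase⟩ r hr x y hxy
    rcases hcase with ⟨c, hc⟩ | hg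
    · rw [hc x, hc y]; exact hr.1.refl _
    · -- it suffices to handle x ≤ y
      suffices aux : ∀ x y, x ≤ y → r x y → r (f x) (f y) by
        rcases le_total x y with h | h
        · exact aux x y h hxy
        · exact hr.1.symm (aux y x h (hr.1.symm hxy))
      clear hxy x y
      intro x y hle hxy
      set d : ℕ := y - x with hd
      rcases Nat.eq_zero_or_pos d with hd0 | hdpos
      · have : y = x := by omega
        subst this
        exact hr.1.refl _
      have hyx : y = x + d := by omega
      have key : ∀ m a, r (x + a) (x + a + d * m) := by
        intro m a
        induction m with
        | zero => simpa using hr.1.refl (x + a)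
        | succ k ih =>
          have step := hr.2 x y (a + d * k) (a + d * k) hxy (hr.1.refl _)
          have e1 : x + (a + d * k) = x + a + d * k := by ring
          have e2 : y + (a + d * k) = x + a + d * (k + 1) := by rw [hyx]; ring
          rw [e1, e2] at step
          exact hr.1.trans ih step
      have hfx : x ≤ f x := le_trans (le_refl x) (hg x)
      have hfy : x ≤ f y := le_trans hle (hg y)
      set a : ℕ := f x - x with ha
      set b : ℕ := f y - x with hb
      have hfa : f x = x + a := by omega
      have hfb : f y = x + b := by omega
      have hdab : (d:ℤ) ∣ (b:ℤ) - a := by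
        have h1 := hdvd y x
        have e : (y:ℤ) - x = (d:ℤ) := by push_cast; omega
        rw [e] at h1
        have e2 : (f y : ℤ) - f x = (b:ℤ) - a := by rw [hfa, hfb]; push_cast; ring
        rwa [e2] at h1
      rcases le_total a b with hab | hab
      · have hnat : d ∣ b - a := by
          have : ((b - a : ℕ) : ℤ) = (b:ℤ) - a := by push_cast; omega
          exact_mod_cast this ▸ hdab
        obtain ⟨m, hm⟩ := hnat
        have hbm : b = a + d * m := by omega
        have := key m a
        rw [hfa, hfb, hbm, ← add_assoc]
        exact this
      · have hdab' : (d:ℤ) ∣ (a:ℤ) - b := by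
          have := dvd_neg.mpr hdab; simpa using this
        have hnat : d ∣ a - b := by
          have : ((a - b : ℕ) : ℤ) = (a:ℤ) - b := by push_cast; omega
          exact_mod_cast this ▸ hdab'
        obtain ⟨m, hm⟩ := hnat
        have ham : a = b + d * m := by omega
        have := key m b
        rw [hfa, hfb, ham, ← add_assoc]
        exact hr.1.symm this
end

section
/- Every additive congruence ∼ on ℕ is either the equality relation, or there exist a ∈ ℕ and k ≥ 1 such that for all x, y ∈ ℕ: x ∼ y if and only if (x = y, or (a ≤ x and a ≤ y and x ≡ y (mod k))). Moreover, in the latter case ∼ has exactly a + k equivalence classes, and ∼ is cancellable (meaning x + z ∼ y + z implies x ∼ y) if and only if a = 0. -/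
section Helpers

variable {r : ℕ → ℕ → Prop}

lemma AC.stepAt (hr : IsAddCongN r) {n k u : ℕ} (h : r n (n + k)) (hu : n ≤ u) :
    r u (u + k) := by
  have h2 := hr.2 n (n + k) (u - n) (u - n) h (hr.1.refl (u - n))
  have e1 : n + (u - n) = u := by omega
  have e2 : n + k + (u - n) = u + k := by omega
  rwa [e1, e2] at h2

lemma AC.iter (hr : IsAddCongN r) {n k : ℕ} (h : r n (n + k)) :
    ∀ t, r n (n + t * k) := by
  intro t
  induction t with
  | zero => simpa using hr.1.refl n
  | succ t ih =>
      have hstep : r (n + t * k) (n + t * k + k) :=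
        AC.stepAt hr h (Nat.le_add_right _ _)
      have e : n + t * k + k = n + (t + 1) * k := by ring
      rw [e] at hstep
      exact hr.1.trans ih hstep

lemma AC.reach (hr : IsAddCongN r) {n k : ℕ} (h : r n (n + k)) {u v : ℕ}
    (hu : n ≤ u) (hv : n ≤ v) (huv : u ≡ v [MOD k]) : r u v := by
  rcases le_total u v with hle | hle
  · obtain ⟨t, ht⟩ := (Nat.modEq_iff_dvd' hle).mp huv
    have h2 : r u (u + t * k) := AC.iter hr (AC.stepAt hr h hu) t
    have e : u + t * k = v := by
      have hc : t * k = k * t := Nat.mul_comm _ _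
      omega
    rwa [e] at h2
  · obtain ⟨t, ht⟩ := (Nat.modEq_iff_dvd' hle).mp huv.symm
    have h2 : r v (v + t * k) := AC.iter hr (AC.stepAt hr h hv) t
    have e : v + t * k = u := by
      have hc : t * k = k * t := Nat.mul_comm _ _
      omega
    rw [e] at h2
    exact hr.1.symm h2

lemma AC.dvd (hr : IsAddCongN r) {n k : ℕ} (hk1 : 1 ≤ k) (hk : r n (n + k))
    (hmin : ∀ d, 1 ≤ d → d < k → ∀ m, ¬ r m (m + d)) {m d : ℕ} (hd : r m (m + d)) :
    k ∣ d := by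
  by_cases hd0 : d = 0
  · simp [hd0]
  have hd1 : 1 ≤ d := by omega
  have hdk : k ≤ d := by
    by_contra hlt
    exact hmin d hd1 (by omega) m hd
  set s := d % k with hs
  have hsk : s < k := Nat.mod_lt _ (by omega)
  by_cases hs0 : s = 0
  · exact Nat.dvd_of_mod_eq_zero hs0
  exfalso
  set N := n + m with hN
  have hN1 : r N (N + k) := AC.stepAt hr hk (Nat.le_add_right _ _)
  have hN2 : r N (N + d) := by
    have := hr.2 n n m (m + d) (hr.1.refl n) hd
    rwa [← Nat.add_assoc] at this
  set q := d / k with hq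
  have hdqs : d = k * q + s := (Nat.div_add_mod d k).symm
  have hN3 : r (N + s) (N + s + q * k) :=
    AC.iter hr (AC.stepAt hr hN1 (Nat.le_add_right _ _)) q
  have e : N + s + q * k = N + d := by
    have : q * k = k * q := Nat.mul_comm _ _
    omega
  rw [e] at hN3
  have hNs : r N (N + s) := hr.1.trans hN2 (hr.1.symm hN3)
  exact hmin s (by omega) hsk N hNs

end Helpers

theorem stmt1 (r : ℕ → ℕ → Prop) (hr : IsAddCongN r) :
    (∀ x y, r x y ↔ x = y) ∨
      ∃ a k : ℕ, 1 ≤ k ∧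
        (∀ x y, r x y ↔ (x = y ∨ (a ≤ x ∧ a ≤ y ∧ x ≡ y [MOD k]))) ∧
        Nat.card (Quotient (Setoid.mk r hr.1)) = a + k ∧
        ((∀ x y z, r (x + z) (y + z) → r x y) ↔ a = 0) := by
  by_cases h : ∀ x y, r x y ↔ x = y
  · exact Or.inl h
  right
  classical
  push_neg at h
  obtain ⟨x₀, y₀, hxy₀⟩ := h
  -- extract a strict related pair
  have hpair : ∃ x y, x < y ∧ r x y := by
    rcases hxy₀ with ⟨hrxy, hne⟩ | ⟨hnr, he⟩
    · rcases lt_or_gt_of_ne hne with hlt | hgt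
      · exact ⟨x₀, y₀, hlt, hrxy⟩
      · exact ⟨y₀, x₀, hgt, hr.1.symm hrxy⟩
    · exact absurd (he ▸ hr.1.refl x₀) hnr
  obtain ⟨x₁, y₁, hlt₁, hr₁⟩ := hpair
  -- a : least n related to something larger
  have hPex : ∃ n, ∃ m, n < m ∧ r n m := ⟨x₁, y₁, hlt₁, hr₁⟩
  set a := Nat.find hPex with ha
  obtain ⟨b, hab, hrab⟩ := Nat.find_spec hPex
  have hamin : ∀ n < a, ¬ ∃ m, n < m ∧ r n m := fun n hn => Nat.find_min hPex hn
  -- k : least positive step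
  have hQex : ∃ d, 1 ≤ d ∧ ∃ n, r n (n + d) := by
    refine ⟨y₁ - x₁, by omega, x₁, ?_⟩
    have e : x₁ + (y₁ - x₁) = y₁ := by omega
    rwa [e]
  set k := Nat.find hQex with hk
  have hk1 : 1 ≤ k := (Nat.find_spec hQex).1
  obtain ⟨n₀, hn₀⟩ := (Nat.find_spec hQex).2
  have hkmin : ∀ d, 1 ≤ d → d < k → ∀ m, ¬ r m (m + d) := by
    intro d hd1 hdk m hrm
    exact Nat.find_min hQex hdk ⟨hd1, m, hrm⟩
  -- r a (a + d) for d = b - a, and k ∣ d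
  have hrad : r a (a + (b - a)) := by
    have e : a + (b - a) = b := by omega
    rwa [e]
  have hkd : k ∣ (b - a) := AC.dvd hr hk1 hn₀ hkmin hrad
  have hQex2 : ∃ Q, k ∣ Q ∧ k ≤ Q ∧ r a (a + Q) := by
    obtain ⟨q, hq⟩ := hkd
    have hq0 : q ≠ 0 := by
      intro h0
      rw [h0, Nat.mul_zero] at hq
      omega
    refine ⟨b - a, ⟨q, hq⟩, ?_, hrad⟩
    calc k = k * 1 := (Nat.mul_one k).symm
    _ ≤ k * q := Nat.mul_le_mul_left k (by omega)
    _ = b - a := hq.symm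
  obtain ⟨Q, hQk, hQ1, hraQ⟩ := hQex2
  have hral : r a (a + k) := by
    have hjQ : n₀ ≤ n₀ * Q := Nat.le_mul_of_pos_right n₀ (by omega)
    have hsplit : (n₀ + 1) * Q = n₀ * Q + Q := by ring
    have h1 : r a (a + (n₀ + 1) * Q) := AC.iter hr hraQ (n₀ + 1)
    have h2 : r (a + k) (a + k + n₀ * Q) := by
      have hstep : r (a + k) (a + k + Q) := by
        have := hr.2 a (a + Q) k k hraQ (hr.1.refl k)
        have e : a + Q + k = a + k + Q := by omega
        rwa [e] at this
      exact AC.iter hr hstep n₀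
    have h3 : r (a + k + n₀ * Q) (a + (n₀ + 1) * Q) := by
      have hle : a + k + n₀ * Q ≤ a + (n₀ + 1) * Q := by omega
      refine AC.reach hr hn₀ (by omega) (by omega) ?_
      refine (Nat.modEq_iff_dvd' hle).mpr ?_
      have e : a + (n₀ + 1) * Q - (a + k + n₀ * Q) = Q - k := by omega
      rw [e]
      exact Nat.dvd_sub hQk (dvd_refl k)
    exact hr.1.trans (hr.1.trans h1 (hr.1.symm h3)) (hr.1.symm h2)
  -- characterization
  have hchar : ∀ x y, r x y ↔ (x = y ∨ (a ≤ x ∧ a ≤ y ∧ x ≡ y [MOD k])) := by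
    intro x y
    constructor
    · intro hxy
      by_cases hxeq : x = y
      · exact Or.inl hxeq
      right
      rcases lt_or_gt_of_ne hxeq with hl | hg
      · have hax : a ≤ x := Nat.find_min' hPex ⟨y, hl, hxy⟩
        have hrxd : r x (x + (y - x)) := by
          have e : x + (y - x) = y := by omega
          rwa [e]
        have hd : k ∣ (y - x) := AC.dvd hr hk1 hn₀ hkmin hrxd
        exact ⟨hax, by omega, (Nat.modEq_iff_dvd' (le_of_lt hl)).mpr hd⟩
      · have hay : a ≤ y := Nat.find_min' hPex ⟨x, hg, hr.1.symm hxy⟩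
        have hryd : r y (y + (x - y)) := by
          have e : y + (x - y) = x := by omega
          rw [e]; exact hr.1.symm hxy
        have hd : k ∣ (x - y) := AC.dvd hr hk1 hn₀ hkmin hryd
        exact ⟨by omega, hay, ((Nat.modEq_iff_dvd' (le_of_lt hg)).mpr hd).symm⟩
    · rintro (rfl | ⟨hax, hay, hmod⟩)
      · exact hr.1.refl x
      · exact AC.reach hr hral hax hay hmod
  refine ⟨a, k, hk1, hchar, ?_, ?_⟩
  · -- cardinality
    have hbij : Function.Bijective
        (fun i : Fin (a + k) => (Quotient.mk (Setoid.mk r hr.1) i.val)) := by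
      constructor
      · intro i j hij
        have hrij : r i.val j.val := Quotient.exact hij
        rcases (hchar i.val j.val).mp hrij with he | ⟨hi, hj, hm⟩
        · exact Fin.ext he
        · have hi2 := i.isLt
          have hj2 := j.isLt
          rcases le_total i.val j.val with hle | hle
          · obtain ⟨t, ht⟩ := (Nat.modEq_iff_dvd' hle).mp hm
            have ht0 : t = 0 := by
              by_contra h0
              have : k * 1 ≤ k * t := Nat.mul_le_mul_left k (by omega)
              omega
            rw [ht0, Nat.mul_zero] at ht
            exact Fin.ext (by omega)
          · obtain ⟨t, ht⟩ := (Nat.modEq_iff_dvd' hle).mp hm.symm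
            have ht0 : t = 0 := by
              by_contra h0
              have : k * 1 ≤ k * t := Nat.mul_le_mul_left k (by omega)
              omega
            rw [ht0, Nat.mul_zero] at ht
            exact Fin.ext (by omega)
      · intro z
        induction z using Quotient.ind with
        | _ x =>
          by_cases hx : x < a + k
          · exact ⟨⟨x, hx⟩, rfl⟩
          · have hax : a ≤ x := by omega
            set v := a + (x - a) % k with hv
            have hvlt : v < a + k := by
              have := Nat.mod_lt (x - a) (show 0 < k by omega)
              omega
            refine ⟨⟨v, hvlt⟩, ?_⟩
            refine Quotient.sound ?_
            show r v x
            refine AC.reach hr hral (by omega) hax ?_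
            have h1 : (x - a) % k ≡ (x - a) [MOD k] := Nat.mod_modEq _ _
            have h2 : a + (x - a) % k ≡ a + (x - a) [MOD k] := h1.add_left a
            have e : a + (x - a) = x := by omega
            rwa [e] at h2
    have := Nat.card_eq_of_bijective _ hbij
    simpa using this.symm
  · -- cancellation iff a = 0
    constructor
    · intro hcan
      by_contra ha0
      obtain ⟨c, hc⟩ : ∃ c, a = c + 1 := ⟨a - 1, by omega⟩
      have h1 : r (c + 1) (c + k + 1) := by
        have e2 : c + k + 1 = a + k := by omega
        have e1 : c + 1 = a := by omega
        rw [e2, e1]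
        exact hral
      have h2 : r c (c + k) := hcan c (c + k) 1 h1
      exact hamin c (by omega) ⟨c + k, by omega, h2⟩
    · intro ha0 x y z hrz
      rcases (hchar (x + z) (y + z)).mp hrz with he | ⟨_, _, hm⟩
      · have : x = y := by omega
        rw [this]; exact hr.1.refl y
      · refine (hchar x y).mpr (Or.inr ⟨by omega, by omega, ?_⟩)
        exact Nat.ModEq.add_right_cancel' z hm
end

section
/- A function f : ℕ → ℕ is stable preorder preserving on ⟨ℕ;+⟩ if and only if f is monotone non-decreasing and congruence preserving on ⟨ℕ;+⟩. -/
/-- `r` is a stable preorder on ⟨ℕ;+⟩: reflexive, transitive, compatible with `+`. -/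
def IsStablePreorderN (r : ℕ → ℕ → Prop) : Prop :=
  (∀ x, r x x) ∧ (∀ x y z, r x y → r y z → r x z) ∧
    (∀ x y x' y', r x y → r x' y' → r (x + x') (y + y'))

/-- `f` is stable preorder preserving on ⟨ℕ;+⟩. -/
def StablePreorderPresN (f : ℕ → ℕ) : Prop :=
  ∀ r : ℕ → ℕ → Prop, IsStablePreorderN r → ∀ x y, r x y → r (f x) (f y)

lemma chainUp (r : ℕ → ℕ → Prop) (hrefl : ∀ x, r x x)
    (htrans : ∀ x y z, r x y → r y z → r x z)
    (hadd : ∀ x y x' y', r x y → r x' y' → r (x + x') (y + y'))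
    (a d : ℕ) (h : r a (a + d)) : ∀ m, r a (a + d * m) := by
  intro m
  induction m with
  | zero => simpa using hrefl a
  | succ m ih =>
    have h2 := hadd a (a + d) (d * m) (d * m) h (hrefl (d * m))
    have e : a + d + d * m = a + d * (m + 1) := by ring
    rw [e] at h2
    exact htrans _ _ _ ih h2

lemma chainDown (r : ℕ → ℕ → Prop) (hrefl : ∀ x, r x x)
    (htrans : ∀ x y z, r x y → r y z → r x z)
    (hadd : ∀ x y x' y', r x y → r x' y' → r (x + x') (y + y'))
    (a d : ℕ) (h : r (a + d) a) : ∀ m, r (a + d * m) a := by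
  intro m
  induction m with
  | zero => simpa using hrefl a
  | succ m ih =>
    have h2 := hadd (a + d) a (d * m) (d * m) h (hrefl (d * m))
    have e : a + d + d * m = a + d * (m + 1) := by ring
    rw [e] at h2
    exact htrans _ _ _ h2 ih

lemma threshCong (t d : ℕ) :
    IsAddCongN (fun a b => a = b ∨ (t ≤ a ∧ t ≤ b ∧ a % d = b % d)) := by
  refine ⟨⟨fun a => Or.inl rfl, ?_, ?_⟩, ?_⟩
  · rintro a b (rfl | ⟨h1, h2, h3⟩)
    · exact Or.inl rfl
    · exact Or.inr ⟨h2, h1, h3.symm⟩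
  · rintro a b c (rfl | ⟨h1, h2, h3⟩) hbc
    · exact hbc
    · rcases hbc with rfl | ⟨g1, g2, g3⟩
      · exact Or.inr ⟨h1, h2, h3⟩
      · exact Or.inr ⟨h1, g2, h3.trans g3⟩
  · rintro a b a' b' (rfl | ⟨h1, h2, h3⟩) (rfl | ⟨g1, g2, g3⟩)
    · exact Or.inl rfl
    · exact Or.inr ⟨by omega, by omega, Nat.ModEq.add_left a g3⟩
    · exact Or.inr ⟨by omega, by omega, Nat.ModEq.add_right a' h3⟩
    · exact Or.inr ⟨by omega, by omega, Nat.ModEq.add h3 g3⟩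

theorem stmt3 (f : ℕ → ℕ) :
    StablePreorderPresN f ↔ (Monotone f ∧ CongPresN f) := by
  constructor
  · intro h
    constructor
    · intro a b hab
      exact h (· ≤ ·) ⟨fun x => le_refl x, fun _ _ _ => le_trans,
        fun _ _ _ _ => Nat.add_le_add⟩ a b hab
    · intro r hr x y hxy
      exact h r ⟨hr.1.refl, fun _ _ _ => hr.1.trans, hr.2⟩ x y hxy
  · rintro ⟨hm, hc⟩ r ⟨hrefl, htrans, hadd⟩ x y hxy
    rcases lt_trichotomy x y with hlt | rfl | hgt
    · set d := y - x with hd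
      have hy : y = x + d := by omega
      have hxycong := hc _ (threshCong x d) x y
        (Or.inr ⟨le_refl x, hlt.le, by rw [hy, Nat.add_mod_right]⟩)
      rcases hxycong with heq | ⟨hxa, hxb, hmod⟩
      · rw [heq]; exact hrefl _
      · have hfle : f x ≤ f y := hm hlt.le
        obtain ⟨m, hmEq⟩ := (Nat.modEq_iff_dvd' hfle).mp hmod
        have hstep := hadd x y (f x - x) (f x - x) hxy (hrefl _)
        have e1 : x + (f x - x) = f x := by omega
        have e2 : y + (f x - x) = f x + d := by omega
        rw [e1, e2] at hstep
        have := chainUp r hrefl htrans hadd (f x) d hstep m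
        have e3 : f y = f x + d * m := by omega
        rw [e3]; exact this
    · exact hrefl _
    · set d := x - y with hd
      have hx : x = y + d := by omega
      have hxycong := hc _ (threshCong y d) x y
        (Or.inr ⟨hgt.le, le_refl y, by rw [hx, Nat.add_mod_right]⟩)
      rcases hxycong with heq | ⟨hxa, hxb, hmod⟩
      · rw [heq]; exact hrefl _
      · have hfle : f y ≤ f x := hm hgt.le
        obtain ⟨m, hmEq⟩ := (Nat.modEq_iff_dvd' hfle).mp hmod.symm
        have hstep := hadd x y (f y - y) (f y - y) hxy (hrefl _)
        have e1 : x + (f y - y) = f y + d := by omega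
        have e2 : y + (f y - y) = f y := by omega
        rw [e1, e2] at hstep
        have := chainDown r hrefl htrans hadd (f y) d hstep m
        have e3 : f x = f y + d * m := by omega
        rw [e3]; exact this
end

section
/- For a subset L ⊆ ℕ the following are equivalent: (1) L is ⟨ℕ;+⟩-recognizable; (2) there exist a ∈ ℕ, k ≥ 1, a set F ⊆ {x | 0 ≤ x < a} and a set R ⊆ {x | a ≤ x < a + k} (possibly empty) such that L = F ∪ {r + k·n | r ∈ R, n ∈ ℕ}. -/
/-- `L ⊆ ℕ` is ⟨ℕ;+⟩-recognizable: the preimage of some subset of a finite additive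
monoid under a surjective additive monoid homomorphism from ℕ. -/
def RecognizableN (L : Set ℕ) : Prop :=
  ∃ (M : Type) (_ : AddMonoid M) (_ : Finite M) (φ : ℕ →+ M),
    Function.Surjective φ ∧ ∃ T : Set M, L = φ ⁻¹' T

namespace Stmt6Aux

/-- Truncation: identity below `a + k`, otherwise reduce into `[a, a+k)` mod `k`. -/
def f (a k n : ℕ) : ℕ := if n < a + k then n else a + (n - a) % k

lemma f_lt (a k : ℕ) (hk : 1 ≤ k) (n : ℕ) : f a k n < a + k := by
  unfold f; split
  · assumption
  · have : (n - a) % k < k := Nat.mod_lt _ hk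
    omega

lemma f_eq_self (a k : ℕ) {n : ℕ} (h : n < a + k) : f a k n = n := if_pos h

lemma f_modEq (a k n : ℕ) : f a k n ≡ n [MOD k] := by
  unfold f; split
  · rfl
  · have h : ¬ n < a + k := by assumption
    calc a + (n - a) % k ≡ a + (n - a) [MOD k] :=
          Nat.ModEq.add_left _ (Nat.mod_modEq _ _)
      _ = n := by omega

lemma f_ge (a k : ℕ) {n : ℕ} (hn : a ≤ n) : a ≤ f a k n := by
  unfold f; split
  · exact hn
  · exact Nat.le_add_right _ _

lemma eq_of_modEq (a k : ℕ) {u v : ℕ} (hu1 : a ≤ u) (hu2 : u < a + k)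
    (hv1 : a ≤ v) (hv2 : v < a + k) (h : u ≡ v [MOD k]) : u = v := by
  rcases le_total u v with hle | hle
  · have hd : k ∣ v - u := (Nat.modEq_iff_dvd' hle).mp h
    have := Nat.eq_zero_of_dvd_of_lt hd
    omega
  · have hd : k ∣ u - v := (Nat.modEq_iff_dvd' hle).mp h.symm
    have := Nat.eq_zero_of_dvd_of_lt hd
    omega

lemma f_congr (a k : ℕ) (hk : 1 ≤ k) {x y : ℕ} (hx : a ≤ x) (hy : a ≤ y)
    (h : x ≡ y [MOD k]) : f a k x = f a k y :=
  eq_of_modEq a k (f_ge a k hx) (f_lt a k hk x) (f_ge a k hy) (f_lt a k hk y)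
    (((f_modEq a k x).trans h).trans (f_modEq a k y).symm)

lemma f_f_add (a k : ℕ) (hk : 1 ≤ k) (m n : ℕ) :
    f a k (f a k m + n) = f a k (m + n) := by
  by_cases h : m < a + k
  · rw [f_eq_self a k h]
  · have hm : a ≤ m := by omega
    exact f_congr a k hk (le_trans (f_ge a k hm) (Nat.le_add_right _ _))
      (le_trans hm (Nat.le_add_right _ _)) (Nat.ModEq.add_right n (f_modEq a k m))

lemma f_add_f (a k : ℕ) (hk : 1 ≤ k) (m n : ℕ) :
    f a k (m + f a k n) = f a k (m + n) := by
  rw [Nat.add_comm m, Nat.add_comm m, f_f_add a k hk]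

lemma f_exists_rep (a k : ℕ) {n : ℕ} (hn : a ≤ n) :
    ∃ q, n = f a k n + k * q := by
  unfold f; split
  · exact ⟨0, by omega⟩
  · refine ⟨(n - a) / k, ?_⟩
    have := Nat.mod_add_div (n - a) k
    omega

/-- The carrier of the finite monoid. -/
def M (a k : ℕ) : Type := {x : ℕ // x < a + k}

def instAddM (a k : ℕ) (hk : 1 ≤ k) : Add (M a k) :=
  ⟨fun x y => ⟨f a k (x.1 + y.1), f_lt a k hk _⟩⟩

def instZeroM (a k : ℕ) (hk : 1 ≤ k) : Zero (M a k) :=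
  ⟨⟨0, by omega⟩⟩

def instM (a k : ℕ) (hk : 1 ≤ k) : AddMonoid (M a k) :=
  letI := instAddM a k hk
  letI := instZeroM a k hk
  { add_assoc := fun x y z => by
      apply Subtype.ext
      show f a k (f a k (x.1 + y.1) + z.1) = f a k (x.1 + f a k (y.1 + z.1))
      rw [f_f_add a k hk, f_add_f a k hk, Nat.add_assoc]
    zero_add := fun x => by
      apply Subtype.ext
      show f a k (0 + x.1) = x.1
      rw [Nat.zero_add]; exact f_eq_self a k x.2
    add_zero := fun x => by
      apply Subtype.ext
      show f a k (x.1 + 0) = x.1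
      rw [Nat.add_zero]; exact f_eq_self a k x.2
    nsmul := nsmulRec
    nsmul_zero := fun _ => rfl
    nsmul_succ := fun _ _ => rfl }

instance (a k : ℕ) : Finite (M a k) :=
  Finite.of_injective (fun x : M a k => (⟨x.1, x.2⟩ : Fin (a + k)))
    (fun x y h => Subtype.ext (congrArg Fin.val h))

end Stmt6Aux

open Stmt6Aux in
theorem stmt6 (L : Set ℕ) :
    RecognizableN L ↔
      ∃ a k : ℕ, 1 ≤ k ∧
        ∃ F R : Set ℕ, F ⊆ {x | x < a} ∧ R ⊆ {x | a ≤ x ∧ x < a + k} ∧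
          L = F ∪ {m | ∃ r ∈ R, ∃ n : ℕ, m = r + k * n} := by
  constructor
  · rintro ⟨M, _, _, φ, hsurj, T, rfl⟩
    -- pigeonhole: find i < j with φ i = φ j
    obtain ⟨i, j, hne, hij⟩ := Finite.exists_ne_map_eq_of_infinite φ
    -- wlog i < j
    obtain ⟨a, b, hab, heq⟩ : ∃ a b : ℕ, a < b ∧ φ a = φ b := by
      rcases lt_or_gt_of_ne hne with h | h
      · exact ⟨i, j, h, hij⟩
      · exact ⟨j, i, h, hij.symm⟩
    set k := b - a with hk
    have hk1 : 1 ≤ k := by omega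
    have hper : ∀ n, a ≤ n → φ (n + k) = φ n := by
      intro n hn
      have h1 : n + k = (n - a) + b := by omega
      have h2 : n = (n - a) + a := by omega
      rw [h1, map_add, ← heq, ← map_add, ← h2]
    have hper' : ∀ n, a ≤ n → ∀ m, φ (n + k * m) = φ n := by
      intro n hn m
      induction m with
      | zero => simp
      | succ m ih =>
        have : n + k * (m + 1) = (n + k * m) + k := by ring
        rw [this, hper _ (by omega), ih]
    refine ⟨a, k, hk1, (φ ⁻¹' T) ∩ {x | x < a}, (φ ⁻¹' T) ∩ {x | a ≤ x ∧ x < a + k},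
      fun x hx => hx.2, fun x hx => hx.2, ?_⟩
    ext n
    constructor
    · intro hn
      by_cases hna : n < a
      · exact Or.inl ⟨hn, hna⟩
      · have hna' : a ≤ n := by omega
        obtain ⟨q, hq⟩ := f_exists_rep a k hna'
        have hr1 : a ≤ f a k n := f_ge a k hna'
        have hr2 : f a k n < a + k := f_lt a k hk1 n
        have hφ : φ (f a k n) = φ n := by
          conv_rhs => rw [hq]
          exact (hper' _ hr1 q).symm
        refine Or.inr ⟨f a k n, ⟨?_, hr1, hr2⟩, q, hq⟩
        show φ (f a k n) ∈ T
        rw [hφ]; exact hn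
    · rintro (⟨h, _⟩ | ⟨r, ⟨hr, hr1, _⟩, q, rfl⟩)
      · exact h
      · show φ (r + k * q) ∈ T
        rw [hper' _ hr1 q]; exact hr
  · rintro ⟨a, k, hk, F, R, hF, hR, rfl⟩
    letI : AddMonoid (M a k) := instM a k hk
    refine ⟨M a k, inferInstance, inferInstance,
      { toFun := fun n => ⟨f a k n, f_lt a k hk n⟩
        map_zero' := by
          apply Subtype.ext
          show f a k 0 = 0
          exact f_eq_self a k (by omega)
        map_add' := fun m n => by
          apply Subtype.ext
          show f a k (m + n) = f a k (f a k m + f a k n)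
          rw [f_f_add a k hk, f_add_f a k hk] },
      fun y => ⟨y.1, Subtype.ext (f_eq_self a k y.2)⟩,
      {m : M a k | m.1 ∈ F ∪ R}, ?_⟩
    ext n
    show (n ∈ F ∪ _) ↔ f a k n ∈ F ∪ R
    by_cases hna : n < a
    · rw [f_eq_self a k (by omega)]
      constructor
      · rintro (h | ⟨r, hr, q, rfl⟩)
        · exact Or.inl h
        · exact absurd (hR hr).1 (by omega)
      · rintro (h | h)
        · exact Or.inl h
        · exact absurd (hR h).1 (by omega)
    · have hna' : a ≤ n := by omega
      have hr1 : a ≤ f a k n := f_ge a k hna'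
      constructor
      · rintro (h | ⟨r, hr, q, rfl⟩)
        · exact absurd (hF h) (by simpa using hna)
        · -- f a k (r + k * q) = r
          have : f a k (r + k * q) = r := by
            have hmod : r + k * q ≡ r [MOD k] := by
              exact ((Nat.modEq_iff_dvd' (Nat.le_add_right r (k*q))).mpr ⟨q, by omega⟩).symm
            exact eq_of_modEq a k (f_ge a k (le_trans (hR hr).1 (Nat.le_add_right _ _)))
              (f_lt a k hk _) (hR hr).1 (hR hr).2
              ((f_modEq a k _).trans hmod)
          rw [this]; exact Or.inr hr
      · rintro (h | h)
        · exact absurd (hF h) (by simp only [Set.mem_setOf_eq]; omega)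
        · obtain ⟨q, hq⟩ := f_exists_rep a k hna'
          exact Or.inr ⟨f a k n, h, q, hq⟩
end

section
/- Let f : ℕ → ℕ be monotone non-decreasing. The following are equivalent: (1) f is congruence preserving on ⟨ℕ;+⟩ and f(x) ≥ x for all x ∈ ℕ; (2) for every finite subset L ⊆ ℕ, the lattice 𝓛₊(L) is closed under f⁻¹; (3) for every ⟨ℕ;+⟩-recognizable subset L ⊆ ℕ, the lattice 𝓛₊(L) is closed under f⁻¹. -/
/-- Membership in `𝓛₊(L)`, the smallest family of subsets of ℕ containing `L` and
closed under binary union, binary intersection, and preimages of translations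
`X ↦ {n | n + a ∈ X}`. -/
inductive LatPlusN (L : Set ℕ) : Set ℕ → Prop
  | base : LatPlusN L L
  | union {X Y : Set ℕ} : LatPlusN L X → LatPlusN L Y → LatPlusN L (X ∪ Y)
  | inter {X Y : Set ℕ} : LatPlusN L X → LatPlusN L Y → LatPlusN L (X ∩ Y)
  | shift {X : Set ℕ} (a : ℕ) : LatPlusN L X → LatPlusN L {n | n + a ∈ X}

/-- The lattice `𝓛₊(L)` is closed under `f⁻¹`. -/
def LatPlusNClosedPreimage (L : Set ℕ) (f : ℕ → ℕ) : Prop :=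
  ∀ M : Set ℕ, LatPlusN L M → LatPlusN L (f ⁻¹' M)

/-!
Call `f` admissible if it is monotone, inflationary and `f x ≡ f (x + d) [MOD d]` for all
`x, d`; for monotone `f` this is condition (1). Admissible functions are stable under
`f ↦ f + a`, so by induction on `𝓛₊(L)` it suffices to show `f⁻¹(L) ∈ 𝓛₊(L)`. A recognizable
`L` has finitely many translates `L - a`, so `𝓛₊(L)` contains every union of nonempty
intersections of translates, and `f⁻¹(L)` is such a union because it is upward closed for the
preorder "every translate containing `n` contains `m`": if `L - n ⊆ L - (n + d)`, then
`L - n ⊆ L - (n + kd)` for all `k`, while `f (n + d) = f n + kd` for some `k` (similarly when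
`m ≤ n`).

Conversely, every set in `𝓛₊(L)` inherits the upper bounds of `L`, and the closure under
`n + d ↦ n` when `L` has it; applying (2) to `{f x}` and to
`{m ≤ f (x + d) | m ≡ f (x + d) [MOD d]}` gives `x ≤ f x` and `f x ≡ f (x + d) [MOD d]`.
-/

structure Admissible (f : ℕ → ℕ) : Prop where
  mono : Monotone f
  le_apply : ∀ x, x ≤ f x
  modEq : ∀ x d, f x ≡ f (x + d) [MOD d]

namespace Admissible

variable {f : ℕ → ℕ}

theorem add_const (hf : Admissible f) (a : ℕ) : Admissible fun x => f x + a where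
  mono _ _ h := Nat.add_le_add_right (hf.mono h) a
  le_apply x := (hf.le_apply x).trans (Nat.le_add_right _ a)
  modEq x d := (hf.modEq x d).add_right a

theorem exists_apply_add_eq (hf : Admissible f) (x d : ℕ) : ∃ k, f (x + d) = f x + k * d := by
  obtain ⟨k, hk⟩ := (Nat.modEq_iff_dvd' (hf.mono (Nat.le_add_right x d))).mp (hf.modEq x d)
  exact ⟨k, by rw [Nat.mul_comm, ← hk, Nat.add_sub_cancel' (hf.mono (Nat.le_add_right x d))]⟩

end Admissible

theorem add_mul_add_mem_of_forall_add_mem {L : Set ℕ} {a d : ℕ}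
    (h : ∀ b, a + b ∈ L → a + d + b ∈ L) (k : ℕ) {b : ℕ} (hb : a + b ∈ L) :
    a + k * d + b ∈ L := by
  induction k with
  | zero => simpa using hb
  | succ k ih =>
    have := h (k * d + b) (by rwa [← Nat.add_assoc])
    rwa [show a + d + (k * d + b) = a + (k + 1) * d + b by ring] at this

theorem Admissible.apply_mem_of_forall_add_mem {f : ℕ → ℕ} (hf : Admissible f) {L : Set ℕ}
    {n m : ℕ} (h : ∀ b, n + b ∈ L → m + b ∈ L) (hn : f n ∈ L) : f m ∈ L := by
  have hn' : n ≤ f n := hf.le_apply n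
  have hm' : m ≤ f m := hf.le_apply m
  rcases le_total n m with hnm | hmn
  · obtain ⟨d, rfl⟩ := Nat.exists_eq_add_of_le hnm
    obtain ⟨k, hk⟩ := hf.exists_apply_add_eq n d
    have := add_mul_add_mem_of_forall_add_mem h k (b := f n - n) (by rwa [Nat.add_sub_cancel' hn'])
    rwa [hk, ← show n + k * d + (f n - n) = f n + k * d by omega]
  · obtain ⟨d, rfl⟩ := Nat.exists_eq_add_of_le hmn
    obtain ⟨k, hk⟩ := hf.exists_apply_add_eq m d
    -- `h` is the hypothesis of the first case for `Lᶜ`, with `n` and `m` swapped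
    by_contra hfm
    refine add_mul_add_mem_of_forall_add_mem (L := Lᶜ) (fun b hb hmb => hb (h b hmb)) k
      (b := f m - m) (by rwa [Nat.add_sub_cancel' hm']) ?_
    rwa [show m + k * d + (f m - m) = f m + k * d by omega, ← hk]

def shifts (L : Set ℕ) : Set (Set ℕ) :=
  Set.range fun a => {n | n + a ∈ L}

namespace LatPlusN

variable {L : Set ℕ}

theorem of_mem_shifts {X : Set ℕ} (hX : X ∈ shifts L) : LatPlusN L X := by
  obtain ⟨a, rfl⟩ := hX
  exact shift a base

theorem supClosed : SupClosed {X | LatPlusN L X} := fun _ hX _ hY => union hX hY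

theorem infClosed : InfClosed {X | LatPlusN L X} := fun _ hX _ hY => inter hX hY

theorem sInter_of_subset_shifts (hL : (shifts L).Finite) {𝒳 : Set (Set ℕ)}
    (h𝒳 : 𝒳 ⊆ shifts L) (hne : 𝒳.Nonempty) : LatPlusN L (⋂₀ 𝒳) :=
  infClosed.sInf_mem_of_nonempty (hL.subset h𝒳) hne fun _ hX => of_mem_shifts (h𝒳 hX)

-- `hbot` stands in for the empty union, which `𝓛₊(L)` need not contain.
theorem of_forall_mem_sInter_subset (hL : (shifts L).Finite) {S : Set ℕ}
    (hS : ∀ n ∈ S, ∃ 𝒳 ⊆ shifts L, 𝒳.Nonempty ∧ n ∈ ⋂₀ 𝒳 ∧ ⋂₀ 𝒳 ⊆ S)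
    (hbot : ⋂₀ shifts L ⊆ S) : LatPlusN L S := by
  set 𝒜 : Set (Set (Set ℕ)) := {𝒳 | 𝒳 ⊆ shifts L ∧ 𝒳.Nonempty ∧ ⋂₀ 𝒳 ⊆ S}
  have hS𝒜 : S = ⨆ 𝒳 ∈ 𝒜, ⋂₀ 𝒳 := by
    ext n
    simp only [Set.iSup_eq_iUnion, Set.mem_iUnion]
    constructor
    · intro hn
      obtain ⟨𝒳, h𝒳, hne, hn𝒳, h𝒳S⟩ := hS n hn
      exact ⟨𝒳, ⟨h𝒳, hne, h𝒳S⟩, hn𝒳⟩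
    · rintro ⟨𝒳, ⟨-, -, h𝒳S⟩, hn𝒳⟩
      exact h𝒳S hn𝒳
  rw [hS𝒜]
  refine supClosed.biSup_mem_of_nonempty (hL.finite_subsets.subset fun _ h => h.1)
    ⟨shifts L, subset_rfl, Set.range_nonempty _, hbot⟩ fun 𝒳 h𝒳 => ?_
  exact sInter_of_subset_shifts hL h𝒳.1 h𝒳.2.1

end LatPlusN

namespace Admissible

variable {f : ℕ → ℕ} {L : Set ℕ}

theorem latPlusN_preimage_self (hf : Admissible f) (hL : (shifts L).Finite) :
    LatPlusN L (f ⁻¹' L) := by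
  have mem_shift : ∀ n, f n ∈ L → n ∈ {m | m + (f n - n) ∈ L} := fun n hn => by
    rwa [← Nat.add_sub_cancel' (hf.le_apply n)] at hn
  refine LatPlusN.of_forall_mem_sInter_subset hL (fun n hn => ?_) fun m hm => ?_
  · refine ⟨{X ∈ shifts L | n ∈ X}, Set.sep_subset _ _,
      ⟨_, ⟨_, rfl⟩, mem_shift n hn⟩, fun X hX => hX.2, fun m hm => ?_⟩
    exact hf.apply_mem_of_forall_add_mem (fun b hb => hm {k | k + b ∈ L} ⟨⟨b, rfl⟩, hb⟩) hn
  · have : m + (f m - m) ∈ L := hm _ ⟨f m - m, rfl⟩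
    rwa [Nat.add_sub_cancel' (hf.le_apply m)] at this

theorem latPlusN_preimage (hf : Admissible f) (hL : (shifts L).Finite) {M : Set ℕ}
    (hM : LatPlusN L M) : LatPlusN L (f ⁻¹' M) := by
  induction hM generalizing f with
  | base => exact hf.latPlusN_preimage_self hL
  | union _ _ ihX ihY => exact .union (ihX hf) (ihY hf)
  | inter _ _ ihX ihY => exact .inter (ihX hf) (ihY hf)
  | shift a _ ih => exact ih (hf.add_const a)

end Admissible

theorem RecognizableN.finite_shifts {L : Set ℕ} (hL : RecognizableN L) : (shifts L).Finite := by
  obtain ⟨M, _, _, φ, -, T, rfl⟩ := hL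
  refine (Set.finite_range fun m : M => {n | φ n + m ∈ T}).subset ?_
  rintro _ ⟨a, rfl⟩
  exact ⟨φ a, by ext n; simp [map_add]⟩

def truncAddCon (B : ℕ) : AddCon ℕ where
  toSetoid := Setoid.ker (min · B)
  add' {_ _ _ _} h h' := by
    simp only [Setoid.ker_def] at *
    omega

theorem Set.Finite.recognizableN {L : Set ℕ} (hL : L.Finite) : RecognizableN L := by
  obtain ⟨B, hB⟩ := hL.bddAbove
  let c := truncAddCon (B + 1)
  have hc : ∀ m n, (c.mk' m = c.mk' n) ↔ min m (B + 1) = min n (B + 1) := fun m n => c.eq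
  refine ⟨c.Quotient, inferInstance, ?_, c.mk', c.mk'_surjective, c.mk' '' L, ?_⟩
  · refine Finite.of_surjective (fun i : Fin (B + 2) => c.mk' i) fun x => ?_
    obtain ⟨n, rfl⟩ := c.mk'_surjective x
    exact ⟨⟨min n (B + 1), by omega⟩, (hc _ _).2 (by simp)⟩
  · refine (Set.subset_preimage_image _ _).antisymm ?_
    rintro n ⟨m, hm, hmn⟩
    have := (hc m n).1 hmn
    have := hB hm
    obtain rfl : m = n := by omega
    exact hm

namespace LatPlusN

variable {L X : Set ℕ}

theorem upperBounds_subset (hX : LatPlusN L X) : upperBounds L ⊆ upperBounds X := by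
  intro k hk
  induction hX with
  | base => exact hk
  | union _ _ ihX ihY => exact fun m hm => hm.elim (ihX ·) (ihY ·)
  | inter _ _ ihX _ => exact fun m hm => ihX hm.1
  | shift a _ ih => exact fun m hm => (Nat.le_add_right m a).trans (ih hm)

theorem mem_of_add_mem {d : ℕ} (hL : ∀ n, n + d ∈ L → n ∈ L) (hX : LatPlusN L X) :
    ∀ n, n + d ∈ X → n ∈ X := by
  induction hX with
  | base => exact hL
  | union _ _ ihX ihY => exact fun n hn => hn.imp (ihX n) (ihY n)
  | inter _ _ ihX ihY => exact fun n hn => ⟨ihX n hn.1, ihY n hn.2⟩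
  | shift a _ ih => exact fun n hn => ih (n + a) (by rwa [Nat.add_right_comm])

end LatPlusN

theorem admissible_of_latPlusNClosedPreimage {f : ℕ → ℕ} (hf : Monotone f)
    (h : ∀ L : Set ℕ, L.Finite → LatPlusNClosedPreimage L f) : Admissible f where
  mono := hf
  le_apply x := LatPlusN.upperBounds_subset (h {f x} (Set.finite_singleton _) _ .base)
    (by simp) (Set.mem_preimage.2 rfl)
  modEq x d := by
    let L := {m | m ≤ f (x + d) ∧ m ≡ f (x + d) [MOD d]}
    have hL : ∀ n, n + d ∈ L → n ∈ L := fun n hn =>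
      ⟨(Nat.le_add_right n d).trans hn.1, Nat.add_modEq_right.symm.trans hn.2⟩
    have hfin : L.Finite := (Set.finite_Iic _).subset fun m hm => hm.1
    exact (LatPlusN.mem_of_add_mem hL (h L hfin L .base) x ⟨le_rfl, rfl⟩).2

theorem IsAddCongN.add_mul {r : ℕ → ℕ → Prop} (hr : IsAddCongN r) {a d : ℕ} (h : r a (a + d))
    (k : ℕ) : r a (a + k * d) := by
  induction k with
  | zero => simpa using hr.1.refl a
  | succ k ih =>
    refine hr.1.trans ih ?_
    have := hr.2 _ _ _ _ h (hr.1.refl (k * d))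
    rwa [show a + d + k * d = a + (k + 1) * d by ring] at this

theorem CongPresN.modEq {f : ℕ → ℕ} (hf : CongPresN f) (x d : ℕ) : f x ≡ f (x + d) [MOD d] := by
  let r a b := a ≡ b [MOD d] ∧ min a x = min b x
  have hr : IsAddCongN r :=
    ⟨⟨fun _ => ⟨rfl, rfl⟩, fun h => ⟨h.1.symm, h.2.symm⟩,
        fun h h' => ⟨h.1.trans h'.1, h.2.trans h'.2⟩⟩,
      fun _ _ _ _ h h' => ⟨h.1.add h'.1, by omega⟩⟩
  exact (hf r hr x (x + d) ⟨Nat.add_modEq_right.symm, by omega⟩).1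

theorem Admissible.congPresN {f : ℕ → ℕ} (hf : Admissible f) : CongPresN f := by
  intro r hr
  suffices ∀ a d, r a (a + d) → r (f a) (f (a + d)) by
    intro a b hab
    rcases le_total a b with hab' | hba
    · obtain ⟨d, rfl⟩ := Nat.exists_eq_add_of_le hab'
      exact this a d hab
    · obtain ⟨d, rfl⟩ := Nat.exists_eq_add_of_le hba
      exact hr.1.symm (this b d (hr.1.symm hab))
  intro a d h
  obtain ⟨k, hk⟩ := hf.exists_apply_add_eq a d
  have := hr.2 _ _ _ _ (hr.add_mul h k) (hr.1.refl (f a - a))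
  rwa [Nat.add_right_comm, Nat.add_sub_cancel' (hf.le_apply a), ← hk] at this

theorem admissible_iff {f : ℕ → ℕ} (hf : Monotone f) :
    Admissible f ↔ CongPresN f ∧ ∀ x, x ≤ f x :=
  ⟨fun h => ⟨h.congPresN, h.le_apply⟩, fun h => ⟨hf, h.2, h.1.modEq⟩⟩

theorem stmt7 (f : ℕ → ℕ) (hf : Monotone f) :
    ((CongPresN f ∧ ∀ x, x ≤ f x) ↔
        ∀ L : Set ℕ, L.Finite → LatPlusNClosedPreimage L f) ∧
    ((CongPresN f ∧ ∀ x, x ≤ f x) ↔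
        ∀ L : Set ℕ, RecognizableN L → LatPlusNClosedPreimage L f) := by
  rw [← admissible_iff hf]
  have recognizable : Admissible f → ∀ L : Set ℕ, RecognizableN L → LatPlusNClosedPreimage L f :=
    fun h _ hL _ hM => h.latPlusN_preimage hL.finite_shifts hM
  have finite : (∀ L : Set ℕ, L.Finite → LatPlusNClosedPreimage L f) → Admissible f :=
    admissible_of_latPlusNClosedPreimage hf
  exact ⟨⟨fun h L hL => recognizable h L hL.recognizableN, finite⟩,
    ⟨recognizable, fun h => finite fun L hL => h L hL.recognizableN⟩⟩
end

section
/- Let S be a semigroup and let ≼ be a stable preorder on S which is cancellable, i.e., x·z ≼ y·z implies x ≼ y, and z·x ≼ z·y implies x ≼ y. Let ∼ be the equivalence relation defined by x ∼ y iff (x ≼ y and y ≼ x). If ∼ has only finitely many equivalence classes, then ≼ is symmetric, i.e., ≼ coincides with ∼ (so ≼ is a congruence). -/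
private def pw {S : Type*} [Semigroup S] (t : S) : ℕ → S
  | 0 => t
  | k+1 => t * pw t k

private lemma pw_zero {S : Type*} [Semigroup S] (t : S) : pw t 0 = t := rfl

private lemma pw_succ {S : Type*} [Semigroup S] (t : S) (k : ℕ) :
    pw t (k + 1) = t * pw t k := rfl

private lemma pw_add {S : Type*} [Semigroup S] (t : S) (a b : ℕ) :
    pw t (a + b + 1) = pw t a * pw t b := by
  induction a with
  | zero => simp [pw]
  | succ a ih =>
    have h : a + 1 + b + 1 = (a + b + 1) + 1 := by omega
    rw [h, pw_succ, ih, pw_succ, mul_assoc]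

theorem stmt10 (S : Type*) [Semigroup S] (r : S → S → Prop)
    (hrefl : ∀ x, r x x)
    (htrans : ∀ x y z, r x y → r y z → r x z)
    (hstable : ∀ x y x' y', r x y → r x' y' → r (x * x') (y * y'))
    (hcancel_right : ∀ x y z, r (x * z) (y * z) → r x y)
    (hcancel_left : ∀ x y z, r (z * x) (z * y) → r x y)
    (hfin : (Set.range fun x : S => {y : S | r x y ∧ r y x}).Finite) :
    ∀ x y, r x y → r y x := by
  intro x y hxy
  -- Step A : powers repeat up to equivalence
  have stepA : ∀ t : S, ∃ i j : ℕ, i < j ∧ r (pw t i) (pw t j) ∧ r (pw t j) (pw t i) := by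
    intro t
    have hmem : ∀ k : ℕ, {z : S | r (pw t k) z ∧ r z (pw t k)} ∈
        Set.range (fun x : S => {y : S | r x y ∧ r y x}) := fun k => ⟨pw t k, rfl⟩
    obtain ⟨i, j, hij, heq⟩ := Set.Finite.exists_lt_map_eq_of_forall_mem hmem hfin
    refine ⟨i, j, hij, ?_⟩
    have hj : pw t j ∈ {z : S | r (pw t i) z ∧ r z (pw t i)} := by
      rw [heq]; exact ⟨hrefl _, hrefl _⟩
    exact hj
  -- Step B : each element is equivalent to a proper power of itself
  have stepB : ∀ t : S, ∃ d : ℕ, 1 ≤ d ∧ r t (pw t d) ∧ r (pw t d) t := by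
    intro t
    obtain ⟨i, j, hij, h1, h2⟩ := stepA t
    cases i with
    | zero => exact ⟨j, hij, h1, h2⟩
    | succ i' =>
      have h3 : pw t j = pw t (j - (i' + 1)) * pw t i' := by
        rw [← pw_add]; congr 1; omega
      have h4 : pw t (i' + 1) = t * pw t i' := rfl
      rw [h3, h4] at h1 h2
      exact ⟨j - (i' + 1), by omega, hcancel_right _ _ _ h1, hcancel_right _ _ _ h2⟩
  -- Step B' : the exponent can be taken ≥ 2
  have stepB' : ∀ t : S, ∃ e : ℕ, r t (pw t (e + 2)) ∧ r (pw t (e + 2)) t := by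
    intro t
    obtain ⟨d, hd1, h1, h2⟩ := stepB t
    rcases Nat.lt_or_ge d 2 with hd | hd
    · have hd1' : d = 1 := by omega
      subst hd1'
      -- t ∼ t*t ; show t ∼ t*(t*t)
      have h1' : r t (t * t) := h1
      have h2' : r (t * t) t := h2
      refine ⟨0, ?_, ?_⟩
      · -- pw t 2 = t * (t * t)
        have : r (t * t) ((t * t) * t) := hstable _ _ _ _ h1' (hrefl t)
        have h5 : r t ((t * t) * t) := htrans _ _ _ h1' this
        have hE : (t * t) * t = pw t 2 := by
          show (t * t) * t = t * (t * t); rw [mul_assoc]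
        rwa [hE] at h5
      · have : r ((t * t) * t) (t * t) := hstable _ _ _ _ h2' (hrefl t)
        have h5 : r ((t * t) * t) t := htrans _ _ _ this h2'
        have hE : (t * t) * t = pw t 2 := by
          show (t * t) * t = t * (t * t); rw [mul_assoc]
        rwa [hE] at h5
    · obtain ⟨k, rfl⟩ : ∃ k, d = k + 2 := ⟨d - 2, by omega⟩
      exact ⟨k, h1, h2⟩
  -- Step C : if t ∼ pw t (d'+1) then E := pw t d' is a two-sided identity up to ∼
  have stepC : ∀ (t : S) (d' : ℕ), r t (pw t (d' + 1)) → r (pw t (d' + 1)) t →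
      ∀ q : S, (r (pw t d' * q) q ∧ r q (pw t d' * q)) ∧
               (r (q * pw t d') q ∧ r q (q * pw t d')) := by
    intro t d' h1 h2 q
    have e1 : pw t (d' + 1) = t * pw t d' := rfl
    have e2 : pw t (d' + 1) = pw t d' * t := by
      have := pw_add t d' 0
      simpa [pw_zero] using this
    constructor
    · constructor
      · -- r (E * q) q : from r (t*E) t, multiply by q, cancel t on left
        have h3 : r ((t * pw t d') * q) (t * q) := by
          rw [← e1]; exact hstable _ _ _ _ h2 (hrefl q)
        rw [mul_assoc] at h3
        exact hcancel_left _ _ _ h3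
      · have h3 : r (t * q) ((t * pw t d') * q) := by
          rw [← e1]; exact hstable _ _ _ _ h1 (hrefl q)
        rw [mul_assoc] at h3
        exact hcancel_left _ _ _ h3
    · constructor
      · have h3 : r (q * (pw t d' * t)) (q * t) := by
          rw [← e2]; exact hstable _ _ _ _ (hrefl q) h2
        rw [← mul_assoc] at h3
        exact hcancel_right _ _ _ h3
      · have h3 : r (q * t) (q * (pw t d' * t)) := by
          rw [← e2]; exact hstable _ _ _ _ (hrefl q) h1
        rw [← mul_assoc] at h3
        exact hcancel_right _ _ _ h3
  -- Main argument
  obtain ⟨e, hy1, hy2⟩ := stepB' y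
  set f : S := pw y (e + 1) with hf_def
  have hfid := stepC y (e + 1) hy1 hy2
  -- c = x * y^(e+1)
  set c : S := x * pw y e with hc_def
  have hcf : r c f := by
    have : r (x * pw y e) (y * pw y e) := hstable _ _ _ _ hxy (hrefl _)
    exact this
  -- powers of c sink below c
  have hcc : r (c * c) c := by
    have h1 : r (c * c) (c * f) := hstable _ _ _ _ (hrefl c) hcf
    have h2 : r (c * f) c := (hfid c).2.1
    exact htrans _ _ _ h1 h2
  have hpow : ∀ a : ℕ, r (pw c a) c := by
    intro a
    induction a with
    | zero => exact hrefl c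
    | succ a ih =>
      have h1 : r (c * pw c a) (c * c) := hstable _ _ _ _ (hrefl c) ih
      exact htrans _ _ _ h1 hcc
  -- idempotent power of c
  obtain ⟨p, hp1, hc1, hc2⟩ := stepB c
  obtain ⟨p', rfl⟩ : ∃ p', p = p' + 1 := ⟨p - 1, by omega⟩
  have hEid := stepC c p' hc1 hc2
  set E : S := pw c p' with hE_def
  -- sim E f
  have hEf : r E f := htrans _ _ _ (hfid E).2.2 ((hEid f).1.1)
  have hfE : r f E := htrans _ _ _ ((hEid f).1.2) (hfid E).2.1
  -- r f c
  have hfc : r f c := htrans _ _ _ hfE (hpow p')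
  -- conclude : x ∼ c*y = x*f ∼ y
  have hkey : c * y = x * f := by
    rw [hc_def, hf_def, mul_assoc]
    congr 1
    have := pw_add y e 0
    simpa [pw_zero] using this.symm
  have h1 : r y (f * y) := (hfid y).1.2
  have h2 : r (f * y) (c * y) := hstable _ _ _ _ hfc (hrefl y)
  have h3 : r (c * y) x := by
    rw [hkey]; exact (hfid x).2.1
  exact htrans _ _ _ (htrans _ _ _ h1 h2) h3
end

section
/- Let G be a group and let ≼ be a stable preorder on G (i.e., x ≼ y and x' ≼ y' imply x·x' ≼ y·y'). If the associated equivalence relation (x ∼ y iff x ≼ y and y ≼ x) has only finitely many equivalence classes, then ≼ is symmetric: x ≼ y implies y ≼ x; hence ≼ equals its associated equivalence and is a congruence on G. -/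
theorem stmt11 (G : Type*) [Group G] (r : G → G → Prop)
    (hrefl : ∀ x, r x x)
    (htrans : ∀ x y z, r x y → r y z → r x z)
    (hstable : ∀ x y x' y', r x y → r x' y' → r (x * x') (y * y'))
    (hfin : (Set.range fun x : G => {y : G | r x y ∧ r y x}).Finite) :
    ∀ x y, r x y → r y x := by
  intro x y hxy
  set a := x⁻¹ * y with ha
  have h1a : r 1 a := by
    have := hstable x⁻¹ x⁻¹ x y (hrefl x⁻¹) hxy
    simpa using this
  -- r a^k a^l for k ≤ l
  have hpow : ∀ k l : ℕ, k ≤ l → r (a ^ k) (a ^ l) := by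
    intro k l hkl
    induction l with
    | zero => rw [Nat.le_zero.mp hkl]; exact hrefl _
    | succ n ih =>
      rcases Nat.lt_or_ge k (n + 1) with h | h
      · have hk : k ≤ n := Nat.lt_succ_iff.mp h
        have h1 := ih hk
        have h2 : r (a ^ n) (a ^ (n + 1)) := by
          have := hstable (a ^ n) (a ^ n) 1 a (hrefl _) h1a
          simpa [pow_succ] using this
        exact htrans _ _ _ h1 h2
      · have : k = n + 1 := le_antisymm hkl h
        simpa [this] using hrefl (a ^ (n + 1))
  -- finitely many classes: some two powers equivalent
  have : ∃ i j : ℕ, i ≠ j ∧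
      ({y : G | r (a ^ i) y ∧ r y (a ^ i)} : Set G) = {y : G | r (a ^ j) y ∧ r y (a ^ j)} := by
    haveI := hfin.to_subtype
    obtain ⟨i, j, hne, heq⟩ := Finite.exists_ne_map_eq_of_infinite
      (fun n : ℕ => (⟨{y : G | r (a ^ n) y ∧ r y (a ^ n)}, ⟨a ^ n, rfl⟩⟩ :
        (Set.range fun x : G => {y : G | r x y ∧ r y x})))
    exact ⟨i, j, hne, congrArg Subtype.val heq⟩
  obtain ⟨i, j, hne, heq⟩ := this
  -- WLOG i < j; get r (a^j) (a^i) with i < j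
  have key : ∃ i j : ℕ, i < j ∧ r (a ^ j) (a ^ i) := by
    rcases Nat.lt_or_ge i j with h | h
    · refine ⟨i, j, h, ?_⟩
      have : (a ^ j) ∈ ({y : G | r (a ^ i) y ∧ r y (a ^ i)} : Set G) := by
        rw [heq]; exact ⟨hrefl _, hrefl _⟩
      exact this.2
    · have h' : j < i := lt_of_le_of_ne h (Ne.symm hne)
      refine ⟨j, i, h', ?_⟩
      have : (a ^ i) ∈ ({y : G | r (a ^ j) y ∧ r y (a ^ j)} : Set G) := by
        rw [← heq]; exact ⟨hrefl _, hrefl _⟩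
      exact this.2
  obtain ⟨i, j, hij, hji⟩ := key
  -- r (a^(j-i)) 1
  have hdrop : r (a ^ (j - i)) 1 := by
    have := hstable (a ^ j) (a ^ i) (a ^ i)⁻¹ (a ^ i)⁻¹ hji (hrefl _)
    have h2 : r (a ^ j * (a ^ i)⁻¹) 1 := by simpa using this
    have hpoweq : a ^ j * (a ^ i)⁻¹ = a ^ (j - i) := (pow_sub a hij.le).symm
    rw [← hpoweq]; exact h2
  have ha1 : r a 1 := by
    have h1 : r a (a ^ (j - i)) := by
      have := hpow 1 (j - i) (by omega)
      simpa using this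
    exact htrans _ _ _ h1 hdrop
  -- conclude: r y x
  have := hstable x x a 1 (hrefl x) ha1
  simpa [ha] using this
end

section
/- Let L ⊆ ℤ be a ⟨ℤ;+⟩-recognizable set with L ≠ ∅ and L ≠ ℤ, and let k ≥ 1 be the smallest positive integer such that L = F + kℤ for some F ⊆ {0, …, k−1}. Then the lattice 𝓛₊(L) (closed under preimages of translations) and the lattice 𝓛₊ₓ(L) (closed under preimages of translations and of multiplications) coincide, and both are equal to the family { G + kℤ | G ⊆ {0, …, k−1} }. -/
/-- `L ⊆ ℤ` is ⟨ℤ;+⟩-recognizable. -/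
def RecognizableZ (L : Set ℤ) : Prop :=
  ∃ (M : Type) (_ : AddMonoid M) (_ : Finite M) (φ : ℤ →+ M),
    Function.Surjective φ ∧ ∃ T : Set M, L = φ ⁻¹' T

/-- Membership in `𝓛₊(L)`: the smallest family of subsets of ℤ containing `L`, closed under
binary union, binary intersection and preimages of translations. -/
inductive LatPlusZ (L : Set ℤ) : Set ℤ → Prop
  | base : LatPlusZ L L
  | union {X Y : Set ℤ} : LatPlusZ L X → LatPlusZ L Y → LatPlusZ L (X ∪ Y)
  | inter {X Y : Set ℤ} : LatPlusZ L X → LatPlusZ L Y → LatPlusZ L (X ∩ Y)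
  | shift {X : Set ℤ} (a : ℤ) : LatPlusZ L X → LatPlusZ L {x | x + a ∈ X}

/-- Membership in `𝓛₊ₓ(L)`: the smallest family of subsets of ℤ containing `L`, closed under
binary union, binary intersection, preimages of translations and preimages of multiplications. -/
inductive LatPlusMulZ (L : Set ℤ) : Set ℤ → Prop
  | base : LatPlusMulZ L L
  | union {X Y : Set ℤ} : LatPlusMulZ L X → LatPlusMulZ L Y → LatPlusMulZ L (X ∪ Y)
  | inter {X Y : Set ℤ} : LatPlusMulZ L X → LatPlusMulZ L Y → LatPlusMulZ L (X ∩ Y)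
  | shift {X : Set ℤ} (a : ℤ) : LatPlusMulZ L X → LatPlusMulZ L {x | x + a ∈ X}
  | div {X : Set ℤ} (a : ℤ) : LatPlusMulZ L X → LatPlusMulZ L {x | a * x ∈ X}

/-- `L = F + kℤ` for some `F ⊆ {0,…,k−1}`. -/
def IsUnionOfClassesMod (k : ℕ) (L : Set ℤ) : Prop :=
  ∃ F : Set ℤ, F ⊆ {x | 0 ≤ x ∧ x < (k : ℤ)} ∧
    L = {m | ∃ f ∈ F, ∃ z : ℤ, m = f + (k : ℤ) * z}

/-!
Write `L` as the preimage of some `T ⊆ ℤ/kℤ`. All operations of either lattice commute with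
reduction mod `k`, so both lattices consist of preimages of subsets of `ℤ/kℤ`. Conversely,
minimality of `k` rules out any nonzero `d` with `T + d ⊆ T` (as `T` is finite, `d` would be a
period of `T`, hence `d.val < k` a period of `L`). Therefore the residue class of `r` is the
intersection of the translates `T - d` over all `d` with `r + d ∈ T`, every nonempty set of
residues is a union of such classes, and the empty set is the intersection of two distinct
classes, which exist because `∅ ≠ T ≠ ℤ/kℤ`.
-/

theorem IsUnionOfClassesMod.exists_preimage {k : ℕ} {S : Set ℤ} (h : IsUnionOfClassesMod k S) :
    ∃ T : Set (ZMod k), S = Int.cast ⁻¹' T := by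
  obtain ⟨F, -, rfl⟩ := h
  refine ⟨Int.cast '' F, Set.ext fun m => ?_⟩
  simp only [Set.mem_ofPred_eq, Set.mem_preimage, Set.mem_image,
    ZMod.intCast_eq_intCast_iff_dvd_sub, dvd_def, sub_eq_iff_eq_add']

theorem isUnionOfClassesMod_of_periodic {p : ℕ} (hp : p ≠ 0) {S : Set ℤ}
    (h : Function.Periodic (· ∈ S) (p : ℤ)) : IsUnionOfClassesMod p S := by
  have hp' : (0 : ℤ) < p := by omega
  refine ⟨S ∩ {x | 0 ≤ x ∧ x < p}, Set.inter_subset_right, Set.ext fun m => ⟨fun hm => ?_, ?_⟩⟩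
  · refine ⟨m % p, ⟨?_, Int.emod_nonneg m hp'.ne', Int.emod_lt_of_pos m hp'⟩, m / p,
      (Int.emod_add_mul_ediv m p).symm⟩
    rw [Int.emod_def, mul_comm]
    exact (h.sub_int_mul_eq (m / p)).mpr hm
  · rintro ⟨f, ⟨hf, -⟩, z, rfl⟩
    rw [mul_comm]
    exact (h.int_mul z f).mpr hf

theorem isUnionOfClassesMod_preimage {k : ℕ} (hk : k ≠ 0) (T : Set (ZMod k)) :
    IsUnionOfClassesMod k (Int.cast ⁻¹' T) :=
  isUnionOfClassesMod_of_periodic hk fun x => by simp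

theorem LatPlusZ.latPlusMulZ {L S : Set ℤ} (h : LatPlusZ L S) : LatPlusMulZ L S := by
  induction h with
  | base => exact .base
  | union _ _ hX hY => exact .union hX hY
  | inter _ _ hX hY => exact .inter hX hY
  | shift a _ hX => exact .shift a hX

theorem LatPlusMulZ.exists_preimage {R : Type*} [Ring R] {T : Set R} {S : Set ℤ}
    (h : LatPlusMulZ (Int.cast ⁻¹' T) S) : ∃ T' : Set R, S = Int.cast ⁻¹' T' := by
  induction h with
  | base => exact ⟨T, rfl⟩
  | union _ _ hX hY =>
    obtain ⟨X, rfl⟩ := hX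
    obtain ⟨Y, rfl⟩ := hY
    exact ⟨X ∪ Y, rfl⟩
  | inter _ _ hX hY =>
    obtain ⟨X, rfl⟩ := hX
    obtain ⟨Y, rfl⟩ := hY
    exact ⟨X ∩ Y, rfl⟩
  | shift a _ hX =>
    obtain ⟨X, rfl⟩ := hX
    exact ⟨{t | t + a ∈ X}, Set.ext fun x => by simp⟩
  | div a _ hX =>
    obtain ⟨X, rfl⟩ := hX
    exact ⟨{t | a * t ∈ X}, Set.ext fun x => by simp⟩

theorem LatPlusZ.biInter {L : Set ℤ} {ι : Type*} {s : Set ι} (hs : s.Finite) (hne : s.Nonempty)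
    {f : ι → Set ℤ} (h : ∀ i ∈ s, LatPlusZ L (f i)) : LatPlusZ L (⋂ i ∈ s, f i) := by
  lift s to Finset ι using hs
  rw [Finset.set_biInter_coe, ← Finset.inf_set_eq_iInter, ← Finset.inf'_eq_inf hne]
  exact Finset.inf'_induction hne f (fun _ hX _ hY => .inter hX hY) h

theorem LatPlusZ.biUnion {L : Set ℤ} {ι : Type*} {s : Set ι} (hs : s.Finite) (hne : s.Nonempty)
    {f : ι → Set ℤ} (h : ∀ i ∈ s, LatPlusZ L (f i)) : LatPlusZ L (⋃ i ∈ s, f i) := by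
  lift s to Finset ι using hs
  rw [Finset.set_biUnion_coe, ← Finset.sup_set_eq_biUnion, ← Finset.sup'_eq_sup hne]
  exact Finset.sup'_induction hne f (fun _ hX _ hY => .union hX hY) h

theorem add_mem_iff_of_forall_add_mem {G : Type*} [AddGroup G] [Finite G] {T : Set G} {d : G}
    (h : ∀ t ∈ T, t + d ∈ T) (t : G) : t + d ∈ T ↔ t ∈ T := by
  have himage : (· + d) '' T = T :=
    Set.eq_of_subset_of_ncard_le (Set.image_subset_iff.2 h)
      (Set.ncard_image_of_injective T (add_left_injective d)).ge
  calc t + d ∈ T ↔ t + d ∈ (· + d) '' T := by rw [himage]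
    _ ↔ t ∈ T := (add_left_injective d).mem_set_image

theorem biInter_add_mem_eq_singleton {G : Type*} [AddCommGroup G] {T : Set G}
    (hT : ∀ d, (∀ t ∈ T, t + d ∈ T) → d = 0) (r : G) :
    ⋂ d ∈ {d | r + d ∈ T}, {x | x + d ∈ T} = {r} := by
  refine Set.eq_singleton_iff_unique_mem.2 ⟨Set.mem_iInter₂.2 fun d hd => hd, fun x hx => ?_⟩
  refine sub_eq_zero.1 (hT (x - r) fun t ht => ?_)
  have : x + (t - r) ∈ T := Set.mem_iInter₂.1 hx (t - r) (by simpa using ht)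
  rwa [add_sub_left_comm] at this

section LatPlusZPreimage

variable {k : ℕ} {T : Set (ZMod k)}

theorem LatPlusZ.preimage_add_mem (d : ZMod k) :
    LatPlusZ (Int.cast ⁻¹' T) (Int.cast ⁻¹' {t | t + d ∈ T}) := by
  obtain ⟨a, rfl⟩ := ZMod.intCast_surjective d
  convert LatPlusZ.shift a .base using 1
  ext x
  simp

variable [NeZero k]

theorem LatPlusZ.preimage_singleton (hT : T.Nonempty) (hstab : ∀ d, (∀ t ∈ T, t + d ∈ T) → d = 0)
    (r : ZMod k) : LatPlusZ (Int.cast ⁻¹' T) (Int.cast ⁻¹' {r}) := by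
  rw [← biInter_add_mem_eq_singleton hstab r, Set.preimage_iInter₂]
  obtain ⟨t, ht⟩ := hT
  exact .biInter (Set.toFinite _) ⟨t - r, by simpa using ht⟩ fun d _ => .preimage_add_mem d

theorem LatPlusZ.preimage (hT : T.Nonempty) (hTu : T ≠ Set.univ)
    (hstab : ∀ d, (∀ t ∈ T, t + d ∈ T) → d = 0) (T' : Set (ZMod k)) :
    LatPlusZ (Int.cast ⁻¹' T) (Int.cast ⁻¹' T') := by
  rcases T'.eq_empty_or_nonempty with rfl | hT'
  · obtain ⟨a, ha⟩ := hT
    obtain ⟨b, hb⟩ := (Set.ne_univ_iff_exists_notMem T).1 hTu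
    have hab : ({a} ∩ {b} : Set (ZMod k)) = ∅ :=
      Set.singleton_inter_eq_empty.2 (ne_of_mem_of_not_mem ha hb)
    rw [← hab, Set.preimage_inter]
    exact .inter (.preimage_singleton ⟨a, ha⟩ hstab a) (.preimage_singleton ⟨a, ha⟩ hstab b)
  · rw [← Set.biUnion_of_singleton T', Set.preimage_iUnion₂]
    exact .biUnion (Set.toFinite T') hT' fun r _ => .preimage_singleton hT hstab r

theorem eq_zero_of_forall_add_mem
    (hmin : ∀ p : ℕ, 1 ≤ p → IsUnionOfClassesMod p (Int.cast ⁻¹' T) → k ≤ p)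
    {d : ZMod k} (hd : ∀ t ∈ T, t + d ∈ T) : d = 0 := by
  by_contra hd0
  have hperiod : Function.Periodic (· ∈ (Int.cast ⁻¹' T : Set ℤ)) (d.val : ℤ) := fun x => by
    simp [add_mem_iff_of_forall_add_mem hd]
  have hval : d.val ≠ 0 := (ZMod.val_ne_zero d).2 hd0
  exact (ZMod.val_lt d).not_ge (hmin _ (by omega) (isUnionOfClassesMod_of_periodic hval hperiod))

end LatPlusZPreimage

theorem stmt15_general (L : Set ℤ)
    (hne : L ≠ ∅) (hnuniv : L ≠ Set.univ)
    (k : ℕ) (hk : 1 ≤ k) (hkL : IsUnionOfClassesMod k L)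
    (hmin : ∀ k' : ℕ, 1 ≤ k' → IsUnionOfClassesMod k' L → k ≤ k') :
    (∀ S : Set ℤ, LatPlusZ L S ↔ IsUnionOfClassesMod k S) ∧
    (∀ S : Set ℤ, LatPlusMulZ L S ↔ IsUnionOfClassesMod k S) := by
  have : NeZero k := ⟨by omega⟩
  obtain ⟨T, rfl⟩ := hkL.exists_preimage
  have hT : T.Nonempty := by
    obtain ⟨x, hx⟩ := Set.nonempty_iff_ne_empty.2 hne
    exact ⟨x, hx⟩
  have hTu : T ≠ Set.univ := by
    rintro rfl
    exact hnuniv Set.preimage_univ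
  have hstab : ∀ d, (∀ t ∈ T, t + d ∈ T) → d = 0 := fun _ => eq_zero_of_forall_add_mem hmin
  have hfwd : ∀ S, LatPlusMulZ (Int.cast ⁻¹' T) S → IsUnionOfClassesMod k S := fun S h => by
    obtain ⟨T', rfl⟩ := h.exists_preimage
    exact isUnionOfClassesMod_preimage (NeZero.ne k) T'
  have hbwd : ∀ S, IsUnionOfClassesMod k S → LatPlusZ (Int.cast ⁻¹' T) S := fun S h => by
    obtain ⟨T', rfl⟩ := h.exists_preimage
    exact .preimage hT hTu hstab T'
  exact ⟨fun S => ⟨fun h => hfwd S h.latPlusMulZ, hbwd S⟩,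
    fun S => ⟨hfwd S, fun h => (hbwd S h).latPlusMulZ⟩⟩

theorem stmt15 (L : Set ℤ) (hrec : RecognizableZ L)
    (hne : L ≠ ∅) (hnuniv : L ≠ Set.univ)
    (k : ℕ) (hk : 1 ≤ k) (hkL : IsUnionOfClassesMod k L)
    (hmin : ∀ k' : ℕ, 1 ≤ k' → IsUnionOfClassesMod k' L → k ≤ k') :
    (∀ S : Set ℤ, LatPlusZ L S ↔ IsUnionOfClassesMod k S) ∧
    (∀ S : Set ℤ, LatPlusMulZ L S ↔ IsUnionOfClassesMod k S) :=
  stmt15_general L hne hnuniv k hk hkL hmin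
end

section
/- A function f : ℤ → ℤ is congruence preserving on ⟨ℤ;+⟩ if and only if for every ⟨ℤ;+⟩-recognizable subset L ⊆ ℤ, the lattice 𝓛₊(L) is closed under f⁻¹ (i.e., f⁻¹(M) ∈ 𝓛₊(L) for every M ∈ 𝓛₊(L)). -/
/-- `r` is an additive congruence on ℤ. -/
def IsAddCongZ (r : ℤ → ℤ → Prop) : Prop :=
  Equivalence r ∧ ∀ x y x' y', r x y → r x' y' → r (x + x') (y + y')

/-- `f` is congruence preserving on ⟨ℤ;+⟩. -/
def CongPresZ (f : ℤ → ℤ) : Prop :=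
  ∀ r : ℤ → ℤ → Prop, IsAddCongZ r → ∀ x y, r x y → r (f x) (f y)

/-!
Everything is governed by the period subgroup `P` of a set `L ⊆ ℤ`. Additive congruences on ℤ
are exactly the congruences modulo subgroups, and `L` is recognizable iff `P ≠ ⊥`, i.e. `L` is
periodic. Every member of `𝓛₊(L)` is `P`-periodic, and conversely, when `L` is periodic and
neither `∅` nor `ℤ`, each coset `c + P` is the finite intersection of the translates `L - a`
with `c + a ∈ L` (`a` ranging over residues), so `𝓛₊(L)` is exactly the family of `P`-periodic
sets. A congruence preserving `f` maps `P`-cosets into `P`-cosets, so `f⁻¹` preserves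
`P`-periodicity. Conversely, for a congruence modulo `H ≠ ⊥`, apply the hypothesis to `L = H`
and to the translate `f y + H ∈ 𝓛₊(H)`.
-/

section Periods

variable {G : Type*} [AddCommGroup G] {L : Set G} {p x y : G}

def periodSubgroup (L : Set G) : AddSubgroup G where
  carrier := {p | ∀ x, x + p ∈ L ↔ x ∈ L}
  zero_mem' x := by rw [add_zero]
  add_mem' {p q} hp hq x := by rw [← add_assoc, hq, hp]
  neg_mem' {p} hp x := by rw [← hp (x + -p), neg_add_cancel_right]

theorem mem_iff_of_sub_mem_periodSubgroup (h : x - y ∈ periodSubgroup L) :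
    x ∈ L ↔ y ∈ L := by
  rw [← h y, add_sub_cancel]

theorem periodSubgroup_coe (H : AddSubgroup G) : periodSubgroup (H : Set G) = H := by
  ext p
  refine ⟨fun hp => by simpa using (hp 0).2 H.zero_mem, fun hp x => H.add_mem_cancel_right hp⟩

/-- `L + k • p ⊆ L` for all `k`, and `-p = (n - 1) • p - n • p` with `n • p` a period. -/
theorem mem_periodSubgroup_of_add_mem {n : ℕ} (hn : 0 < n) (hnp : n • p ∈ periodSubgroup L)
    (h : ∀ x ∈ L, x + p ∈ L) : p ∈ periodSubgroup L := by
  have hiter : ∀ k : ℕ, ∀ x ∈ L, x + k • p ∈ L := by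
    intro k
    induction k with
    | zero => simp
    | succ k ih => intro x hx; simpa [succ_nsmul, add_assoc] using h _ (ih x hx)
  obtain ⟨k, rfl⟩ : ∃ k, n = k + 1 := ⟨n - 1, by omega⟩
  refine fun x => ⟨fun hx => ?_, h x⟩
  rw [← hnp x, succ_nsmul', ← add_assoc]
  exact hiter k _ hx

end Periods

theorem congPresZ_iff_forall_addSubgroup (f : ℤ → ℤ) :
    CongPresZ f ↔ ∀ H : AddSubgroup ℤ, ∀ x y, x - y ∈ H → f x - f y ∈ H := by
  constructor
  · intro hf H x y hxy
    have hH : IsAddCongZ fun x y => x - y ∈ H :=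
      ⟨⟨fun _ => by simp, fun h => by simpa using H.neg_mem h,
        fun h₁ h₂ => by simpa using H.add_mem h₁ h₂⟩,
        fun _ _ _ _ h₁ h₂ => by simpa [add_sub_add_comm] using H.add_mem h₁ h₂⟩
    exact hf _ hH x y hxy
  · rintro hf r ⟨hrefl, hadd⟩ x y hxy
    have hsub : ∀ a b, r a b ↔ r (a - b) 0 := fun a b =>
      ⟨fun h => by simpa [sub_eq_add_neg] using hadd _ _ _ _ h (hrefl.refl (-b)),
        fun h => by simpa using hadd _ _ _ _ h (hrefl.refl b)⟩
    let H : AddSubgroup ℤ :=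
      { carrier := {z | r z 0}
        zero_mem' := hrefl.refl 0
        add_mem' := fun ha hb => by simpa using hadd _ _ _ _ ha hb
        neg_mem' := fun {a} ha => by simpa using (hsub 0 a).1 (hrefl.symm ha) }
    exact (hsub _ _).2 (hf H x y ((hsub x y).1 hxy))

theorem exists_pos_natCast_mem {H : AddSubgroup ℤ} (hH : H ≠ ⊥) :
    ∃ n : ℕ, 0 < n ∧ (n : ℤ) ∈ H := by
  obtain ⟨⟨m, hm⟩, hm0⟩ := AddSubgroup.ne_bot_iff_exists_ne_zero.1 hH
  refine ⟨m.natAbs, Int.natAbs_pos.2 fun h => hm0 (Subtype.ext h), ?_⟩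
  simpa using abs_mem_iff.2 hm

theorem sub_emod_mem {H : AddSubgroup ℤ} {m : ℤ} (hm : m ∈ H) (x : ℤ) : x - x % m ∈ H := by
  rw [Int.emod_def, sub_sub_cancel, mul_comm, ← smul_eq_mul]
  exact H.zsmul_mem hm _

theorem recognizableZ_iff_periodSubgroup_ne_bot (L : Set ℤ) :
    RecognizableZ L ↔ periodSubgroup L ≠ ⊥ := by
  constructor
  · rintro ⟨M, _, _, φ, -, T, rfl⟩
    obtain ⟨a, b, hab, hφ⟩ := Finite.exists_ne_map_eq_of_infinite φ
    have hφ0 : φ (a - b) = 0 := by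
      rw [sub_eq_add_neg, map_add, hφ, ← map_add, add_neg_cancel, map_zero]
    rw [AddSubgroup.ne_bot_iff_exists_ne_zero]
    exact ⟨⟨a - b, fun x => by simp [map_add, hφ0]⟩,
      fun h => hab (sub_eq_zero.1 congr($h.1))⟩
  · intro hL
    obtain ⟨n, hn, hnL⟩ := exists_pos_natCast_mem hL
    have : NeZero n := ⟨hn.ne'⟩
    refine ⟨ZMod n, inferInstance, inferInstance, Int.castAddHom (ZMod n),
      ZMod.intCast_surjective, (↑) '' L, ?_⟩
    ext x
    refine ⟨fun hx => ⟨x, hx, rfl⟩, ?_⟩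
    rintro ⟨y, hy, hyx⟩
    rw [Int.coe_castAddHom, ZMod.intCast_eq_intCast_iff_dvd_sub] at hyx
    obtain ⟨k, hk⟩ := hyx
    refine (mem_iff_of_sub_mem_periodSubgroup ?_).2 hy
    rw [hk, mul_comm, ← smul_eq_mul]
    exact AddSubgroup.zsmul_mem _ hnL k

theorem periodSubgroup_le_preimage {f : ℤ → ℤ} (hf : CongPresZ f) {H : AddSubgroup ℤ}
    {X : Set ℤ} (hX : H ≤ periodSubgroup X) : H ≤ periodSubgroup (f ⁻¹' X) := fun p hp x =>
  show f (x + p) ∈ X ↔ f x ∈ X from mem_iff_of_sub_mem_periodSubgroup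
    (hX ((congPresZ_iff_forall_addSubgroup f).1 hf H _ _ (by simpa using hp)))

namespace LatPlusZ

variable {L X : Set ℤ}

theorem periodSubgroup_le (hX : LatPlusZ L X) : periodSubgroup L ≤ periodSubgroup X := by
  induction hX with
  | base => exact le_rfl
  | union _ _ ihA ihB => exact fun p hp x => or_congr (ihA hp x) (ihB hp x)
  | inter _ _ ihA ihB => exact fun p hp x => and_congr (ihA hp x) (ihB hp x)
  | shift a _ ih =>
    intro p hp x
    show x + p + a ∈ (_ : Set ℤ) ↔ _
    rw [add_right_comm]
    exact ih hp (x + a)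

theorem eq_of_forall_mem_iff (hL : ∀ u v, u ∈ L ↔ v ∈ L) (hX : LatPlusZ L X) : X = L := by
  induction hX with
  | base => rfl
  | union _ _ ihA ihB => rw [ihA, ihB, Set.union_self]
  | inter _ _ ihA ihB => rw [ihA, ihB, Set.inter_self]
  | shift a _ ih => subst ih; exact Set.ext fun x => hL (x + a) x

theorem biInter_s16 {ι : Type*} {s : Finset ι} (hs : s.Nonempty) {Y : ι → Set ℤ}
    (hY : ∀ i ∈ s, LatPlusZ L (Y i)) : LatPlusZ L (⋂ i ∈ s, Y i) := by
  rw [← Finset.inf_set_eq_iInter, ← Finset.inf'_eq_inf hs]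
  exact Finset.inf'_induction hs _ (fun _ hA _ hB => hA.inter hB) hY

theorem biUnion_s16 {ι : Type*} {s : Finset ι} (hempty : LatPlusZ L ∅) {Y : ι → Set ℤ}
    (hY : ∀ i ∈ s, LatPlusZ L (Y i)) : LatPlusZ L (⋃ i ∈ s, Y i) := by
  rw [← Finset.sup_set_eq_biUnion]
  exact Finset.sup_induction hempty (fun _ hA _ hB => hA.union hB) hY

theorem coset {n : ℕ} (hn : 0 < n) (hnL : (n : ℤ) ∈ periodSubgroup L) {u : ℤ}
    (hu : u ∈ L) (c : ℤ) : LatPlusZ L {x | x - c ∈ periodSubgroup L} := by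
  classical
  set A := (Finset.Ico 0 (n : ℤ)).filter (fun a => c + a ∈ L)
  have hA : ∀ y ∈ L, (y - c) % n ∈ A := fun y hy => by
    simp only [A, Finset.mem_filter, Finset.mem_Ico]
    refine ⟨⟨Int.emod_nonneg _ (by omega), Int.emod_lt_of_pos _ (by omega)⟩, ?_⟩
    refine (mem_iff_of_sub_mem_periodSubgroup ?_).2 hy
    rw [show c + (y - c) % n - y = -((y - c) - (y - c) % n) by ring]
    exact neg_mem (sub_emod_mem hnL _)
  -- `x + A ⊆ L` forces `L + (x - c) ⊆ L`, and a translation of `L` into itself is a period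
  have hcoset : {x | x - c ∈ periodSubgroup L} = ⋂ a ∈ A, {x | x + a ∈ L} := by
    ext x
    simp only [Set.mem_iInter₂, Set.mem_ofPred_eq]
    refine ⟨fun hx a ha => ?_, fun hx => ?_⟩
    · refine (mem_iff_of_sub_mem_periodSubgroup (L := L) ?_).2 (Finset.mem_filter.1 ha).2
      rwa [add_sub_add_right_eq_sub]
    · refine mem_periodSubgroup_of_add_mem hn ?_ fun y hy => ?_
      · rw [nsmul_eq_mul, mul_comm, ← smul_eq_mul]
        exact zsmul_mem hnL _
      · refine (mem_iff_of_sub_mem_periodSubgroup ?_).1 (hx _ (hA y hy))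
        rw [show x + (y - c) % n - (y + (x - c)) = -((y - c) - (y - c) % n) by ring]
        exact neg_mem (sub_emod_mem hnL _)
  rw [hcoset]
  exact biInter_s16 ⟨_, hA u hu⟩ fun a _ => shift a base

theorem iff_periodSubgroup_le (hL : periodSubgroup L ≠ ⊥) {u v : ℤ} (hu : u ∈ L)
    (hv : v ∉ L) : LatPlusZ L X ↔ periodSubgroup L ≤ periodSubgroup X := by
  classical
  refine ⟨periodSubgroup_le, fun hX => ?_⟩
  obtain ⟨n, hn, hnL⟩ := exists_pos_natCast_mem hL
  have hempty : LatPlusZ L ∅ := by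
    have hdisj : {x | x - u ∈ periodSubgroup L} ∩ {x | x - v ∈ periodSubgroup L} = ∅ :=
      Set.eq_empty_of_forall_notMem fun x hx => hv <| (mem_iff_of_sub_mem_periodSubgroup <|
        sub_sub_sub_cancel_left v u x ▸ sub_mem (hx.2 : x - v ∈ periodSubgroup L) hx.1).1 hu
    exact hdisj ▸ (coset hn hnL hu u).inter (coset hn hnL hu v)
  have hunion : X = ⋃ c ∈ (Finset.Ico 0 (n : ℤ)).filter (· ∈ X),
      {x | x - c ∈ periodSubgroup L} := by
    ext x
    simp only [Set.mem_iUnion₂, Finset.mem_filter, Finset.mem_Ico, Set.mem_ofPred_eq]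
    refine ⟨fun hx => ⟨x % n, ⟨?_, ?_⟩, sub_emod_mem hnL x⟩,
      fun ⟨c, ⟨_, hc⟩, hxc⟩ => (mem_iff_of_sub_mem_periodSubgroup (hX hxc)).2 hc⟩
    · exact ⟨Int.emod_nonneg _ (by omega), Int.emod_lt_of_pos _ (by omega)⟩
    · exact (mem_iff_of_sub_mem_periodSubgroup (hX (sub_emod_mem hnL x))).1 hx
  rw [hunion]
  exact biUnion_s16 hempty fun c _ => coset hn hnL hu c

theorem preimage_s16 {f : ℤ → ℤ} (hf : CongPresZ f) (hL : periodSubgroup L ≠ ⊥)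
    (hX : LatPlusZ L X) : LatPlusZ L (f ⁻¹' X) := by
  by_cases hsplit : ∃ u ∈ L, ∃ v, v ∉ L
  · obtain ⟨u, hu, v, hv⟩ := hsplit
    rw [iff_periodSubgroup_le hL hu hv] at hX ⊢
    exact periodSubgroup_le_preimage hf hX
  · push Not at hsplit
    have htriv : ∀ u v, u ∈ L ↔ v ∈ L := fun u v =>
      ⟨fun hu => hsplit u hu v, fun hv => hsplit v hv u⟩
    rw [hX.eq_of_forall_mem_iff htriv, show f ⁻¹' L = L from Set.ext fun x => htriv (f x) x]
    exact base

end LatPlusZ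

theorem stmt16 (f : ℤ → ℤ) :
    CongPresZ f ↔
      ∀ L : Set ℤ, RecognizableZ L →
        ∀ M : Set ℤ, LatPlusZ L M → LatPlusZ L (f ⁻¹' M) := by
  refine ⟨fun hf L hL M hM => hM.preimage_s16 hf ((recognizableZ_iff_periodSubgroup_ne_bot L).1 hL),
    fun h => (congPresZ_iff_forall_addSubgroup f).2 fun H x y hxy => ?_⟩
  rcases eq_or_ne H ⊥ with rfl | hH
  · simp [sub_eq_zero.1 (AddSubgroup.mem_bot.1 hxy)]
  have hH' : periodSubgroup (H : Set ℤ) ≠ ⊥ := by rwa [periodSubgroup_coe]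
  have hlat := h H ((recognizableZ_iff_periodSubgroup_ne_bot H).2 hH') _
    (LatPlusZ.shift (-f y) LatPlusZ.base)
  have hper := (periodSubgroup_coe H).ge.trans hlat.periodSubgroup_le
  have hx : f x + -f y ∈ H := (mem_iff_of_sub_mem_periodSubgroup (hper hxy)).2 (by simp)
  simpa [sub_eq_add_neg] using hx
end

section
/- Let p be a prime and ℤ_p the ring of p-adic integers. A function f : ℤ_p → ℤ_p is congruence preserving on ⟨ℤ_p;+,×⟩ if and only if for every ⟨ℤ_p;+,×⟩-recognizable subset L ⊆ ℤ_p, the lattice 𝓛(L) is closed under f⁻¹ (i.e., f⁻¹(M) ∈ 𝓛(L) for every M ∈ 𝓛(L)). -/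
/-- `r` is a ring congruence on ℤ_p. -/
def IsRingCongPadic {p : ℕ} [Fact p.Prime] (r : ℤ_[p] → ℤ_[p] → Prop) : Prop :=
  Equivalence r ∧ (∀ x y x' y', r x y → r x' y' → r (x + x') (y + y')) ∧
    (∀ x y x' y', r x y → r x' y' → r (x * x') (y * y'))

/-- `f` is congruence preserving on ⟨ℤ_p;+,×⟩. -/
def CongPresPadic {p : ℕ} [Fact p.Prime] (f : ℤ_[p] → ℤ_[p]) : Prop :=
  ∀ r : ℤ_[p] → ℤ_[p] → Prop, IsRingCongPadic r → ∀ x y, r x y → r (f x) (f y)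

/-- `L ⊆ ℤ_p` is ⟨ℤ_p;+,×⟩-recognizable. -/
def RecognizablePadic {p : ℕ} [Fact p.Prime] (L : Set ℤ_[p]) : Prop :=
  ∃ (M : Type) (_ : Ring M) (_ : Finite M) (φ : ℤ_[p] →+* M),
    Function.Surjective φ ∧ ∃ T : Set M, L = φ ⁻¹' T

/-- Membership in `𝓛(L)`: the smallest family of subsets of ℤ_p containing `L`, closed under
binary union, binary intersection, and preimages of translations and of multiplications. -/
inductive LatPadic {p : ℕ} [Fact p.Prime] (L : Set ℤ_[p]) : Set ℤ_[p] → Prop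
  | base : LatPadic L L
  | union {X Y : Set ℤ_[p]} : LatPadic L X → LatPadic L Y → LatPadic L (X ∪ Y)
  | inter {X Y : Set ℤ_[p]} : LatPadic L X → LatPadic L Y → LatPadic L (X ∩ Y)
  | shift {X : Set ℤ_[p]} (a : ℤ_[p]) : LatPadic L X → LatPadic L {x | x + a ∈ X}
  | div {X : Set ℤ_[p]} (a : ℤ_[p]) : LatPadic L X → LatPadic L {x | a * x ∈ X}

/-!
Every member of `𝓛(L)` is a union of cosets of the syntactic ideal
`I = {z | a * z + y ∈ L for all a and all y ∈ L}` of `L`, the largest ideal for which `L` is a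
union of cosets. When `L` is recognizable, `I` has finite index, so `I` is a finite intersection
of the sets `{z | a * z + y ∈ L}` and lies in `𝓛(L)`; if moreover `L ≠ ∅, ℤ_p`, then `1 ∉ I`, so
`∅ = I ∩ (I + 1)` and every finite union of cosets of `I` lies in `𝓛(L)`. Hence `𝓛(L)` is the
set of unions of cosets of `I`, which `f⁻¹` preserves when `f` is congruence preserving (and
`𝓛(∅) = {∅}`, `𝓛(ℤ_p) = {ℤ_p}`).

Conversely, the class of `0` of a ring congruence on `ℤ_p` is an ideal; it is `0` or of finite
index. In the latter case take for `L` a single class of `f x`: then `f⁻¹(L)` is again a union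
of classes and contains `x`, so it contains every `y` congruent to `x`.
-/

open Set

section CommRing

variable {R : Type*} [CommRing R]

def IsUnionOfCosets (I : Ideal R) (X : Set R) : Prop :=
  ∀ x y, x - y ∈ I → (x ∈ X ↔ y ∈ X)

/-- The class of `0` of the syntactic congruence of `L`. The converse implication
`a * z + y ∈ L → y ∈ L` follows by replacing `a` with `-a`. -/
def syntacticIdeal (L : Set R) : Ideal R where
  carrier := {z | ∀ a, ∀ y ∈ L, a * z + y ∈ L}
  add_mem' {z w} hz hw a y hy := by simpa [mul_add, add_assoc] using hz a _ (hw a y hy)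
  zero_mem' a y hy := by simpa
  smul_mem' c z hz a y hy := by simpa [mul_assoc] using hz (a * c) y hy

theorem mem_syntacticIdeal {L : Set R} {z : R} :
    z ∈ syntacticIdeal L ↔ ∀ a, ∀ y ∈ L, a * z + y ∈ L :=
  Iff.rfl

theorem isUnionOfCosets_syntacticIdeal (L : Set R) : IsUnionOfCosets (syntacticIdeal L) L :=
  fun x y h => ⟨fun hx => by simpa using h (-1) x hx, fun hy => by simpa using h 1 y hy⟩

theorem IsUnionOfCosets.le_syntacticIdeal {I : Ideal R} {L : Set R}
    (hL : IsUnionOfCosets I L) : I ≤ syntacticIdeal L :=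
  fun z hz a y hy => (hL (a * z + y) y (by simpa using I.mul_mem_left a hz)).2 hy

theorem syntacticIdeal_ne_top {L : Set R} (h₀ : L.Nonempty) (h₁ : L ≠ univ) :
    syntacticIdeal L ≠ ⊤ := by
  intro htop
  obtain ⟨y, hy⟩ := h₀
  have hone : (1 : R) ∈ syntacticIdeal L := htop ▸ Submodule.mem_top
  exact h₁ (eq_univ_of_forall fun z => by simpa using hone (z - y) y hy)

theorem finite_quotient_syntacticIdeal_preimage {M : Type*} [Ring M] [Finite M] {φ : R →+* M}
    (hφ : Function.Surjective φ) (T : Set M) : Finite (R ⧸ syntacticIdeal (φ ⁻¹' T)) := by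
  have hker : IsUnionOfCosets (RingHom.ker φ) (φ ⁻¹' T) := fun x y h => by
    rw [RingHom.sub_mem_ker_iff] at h
    simp [h]
  have : Finite (R ⧸ RingHom.ker φ) :=
    .of_equiv M (RingHom.quotientKerEquivOfSurjective hφ).symm.toEquiv
  exact .of_surjective _ (Ideal.Quotient.factor_surjective hker.le_syntacticIdeal)

theorem Ideal.isUnionOfCosets_self (I : Ideal R) : IsUnionOfCosets I I :=
  fun _ _ h => ⟨fun hx => by simpa using I.sub_mem hx h, fun hy => by simpa using I.add_mem h hy⟩

theorem Set.finite_range_of_factorsThrough {ι α β : Type*} [Finite β] {g : ι → α} {π : ι → β}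
    (h : g.FactorsThrough π) : (range g).Finite :=
  (finite_range fun b : range π => g b.2.choose).subset <|
    range_subset_iff.2 fun i =>
      ⟨⟨π i, i, rfl⟩, h (Exists.choose_spec (⟨i, rfl⟩ : ∃ j, π j = π i))⟩

end CommRing

section Padic

variable {p : ℕ} [Fact p.Prime]

theorem isRingCongPadic_sub_mem (I : Ideal ℤ_[p]) : IsRingCongPadic fun x y => x - y ∈ I := by
  simp_rw [← Ideal.Quotient.eq]
  refine ⟨⟨fun _ => rfl, Eq.symm, Eq.trans⟩, ?_, ?_⟩ <;>
    intro x y x' y' h h' <;> simp [h, h']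

theorem IsUnionOfCosets.preimage_of_congPresPadic {I : Ideal ℤ_[p]} {X : Set ℤ_[p]}
    (hX : IsUnionOfCosets I X) {f : ℤ_[p] → ℤ_[p]} (hf : CongPresPadic f) :
    IsUnionOfCosets I (f ⁻¹' X) :=
  fun x y h => hX _ _ (hf _ (isRingCongPadic_sub_mem I) x y h)

namespace LatPadic

variable {L : Set ℤ_[p]}

theorem isUnionOfCosets {I : Ideal ℤ_[p]} (hL : IsUnionOfCosets I L) {X : Set ℤ_[p]}
    (hX : LatPadic L X) : IsUnionOfCosets I X := by
  induction hX with
  | base => exact hL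
  | union _ _ ihX ihY => exact fun x y h => or_congr (ihX x y h) (ihY x y h)
  | inter _ _ ihX ihY => exact fun x y h => and_congr (ihX x y h) (ihY x y h)
  | shift a _ ih => exact fun x y h => ih (x + a) (y + a) (by simpa using h)
  | div a _ ih =>
    exact fun x y h => ih (a * x) (a * y) (by simpa [← mul_sub] using I.mul_mem_left a h)

theorem eq_self_of_eq_empty_or_univ (hL : L = ∅ ∨ L = univ) {X : Set ℤ_[p]}
    (hX : LatPadic L X) : X = L := by
  induction hX with
  | base => rfl
  | union _ _ ihX ihY => rw [ihX, ihY, union_self]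
  | inter _ _ ihX ihY => rw [ihX, ihY, inter_self]
  | shift a _ ih => subst ih; rcases hL with rfl | rfl <;> simp
  | div a _ ih => subst ih; rcases hL with rfl | rfl <;> simp

theorem sInter {S : Set (Set ℤ_[p])} (hS : S.Finite) (hne : S.Nonempty)
    (h : ∀ X ∈ S, LatPadic L X) : LatPadic L (⋂₀ S) := by
  induction S, hS using Set.Finite.induction_on with
  | empty => exact absurd hne not_nonempty_empty
  | @insert X S _ _ ih =>
    rcases S.eq_empty_or_nonempty with rfl | hS
    · simpa using h X (mem_insert X ∅)
    · rw [sInter_insert]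
      exact (h X (mem_insert X S)).inter (ih hS fun Y hY => h Y (mem_insert_of_mem X hY))

theorem sUnion (h₀ : LatPadic L ∅) {S : Set (Set ℤ_[p])} (hS : S.Finite)
    (h : ∀ X ∈ S, LatPadic L X) : LatPadic L (⋃₀ S) := by
  induction S, hS using Set.Finite.induction_on with
  | empty => simpa using h₀
  | @insert X S _ _ ih =>
    rw [sUnion_insert]
    exact (h X (mem_insert X S)).union (ih fun Y hY => h Y (mem_insert_of_mem X hY))

theorem empty_of_ne_top {I : Ideal ℤ_[p]} (hI : LatPadic L I) (h : I ≠ ⊤) : LatPadic L ∅ := by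
  have hempty : (∅ : Set ℤ_[p]) = (I : Set ℤ_[p]) ∩ {z | z + -1 ∈ I} := by
    refine (eq_empty_of_forall_notMem fun z hz => h ?_).symm
    rw [Ideal.eq_top_iff_one]
    simpa using I.sub_mem hz.1 hz.2
  rw [hempty]
  exact hI.inter (hI.shift (-1))

theorem of_isUnionOfCosets {I : Ideal ℤ_[p]} [Finite (ℤ_[p] ⧸ I)] (hI : LatPadic L I)
    (h₀ : LatPadic L ∅) {Y : Set ℤ_[p]} (hY : IsUnionOfCosets I Y) : LatPadic L Y := by
  have hcosets : Y = ⋃₀ range fun x : Y => {z | z + -(x : ℤ_[p]) ∈ I} := by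
    ext z
    simp only [sUnion_range, mem_iUnion, Subtype.exists, exists_prop]
    exact ⟨fun hz => ⟨z, hz, by simp⟩,
      fun ⟨x, hx, hzx⟩ => (hY z x (by simpa [sub_eq_add_neg])).2 hx⟩
  rw [hcosets]
  refine h₀.sUnion (finite_range_of_factorsThrough (π := fun x : Y => Ideal.Quotient.mk I x) ?_) ?_
  · intro x x' hxx'
    ext z
    refine I.isUnionOfCosets_self _ _ ?_
    convert Ideal.Quotient.eq.1 hxx'.symm using 1
    ring
  · exact forall_mem_range.2 fun x => hI.shift (-(x : ℤ_[p]))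

end LatPadic

theorem latPadic_syntacticIdeal {L : Set ℤ_[p]} [Finite (ℤ_[p] ⧸ syntacticIdeal L)]
    (hne : L.Nonempty) : LatPadic L (syntacticIdeal L) := by
  have hinter : (syntacticIdeal L : Set ℤ_[p]) =
      ⋂₀ range fun i : ℤ_[p] × L => {z | i.1 * z + i.2 ∈ L} := by
    ext z
    simp [mem_syntacticIdeal]
  rw [hinter]
  obtain ⟨y, hy⟩ := hne
  refine LatPadic.sInter ?_ ⟨_, (0, ⟨y, hy⟩), rfl⟩ ?_
  · refine finite_range_of_factorsThrough (π := fun i : ℤ_[p] × L =>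
      (Ideal.Quotient.mk (syntacticIdeal L) i.1, Ideal.Quotient.mk (syntacticIdeal L) i.2)) ?_
    rintro ⟨a, y⟩ ⟨a', y'⟩ h
    simp only [Prod.mk.injEq, Ideal.Quotient.eq] at h
    ext z
    refine isUnionOfCosets_syntacticIdeal L _ _ ?_
    convert (syntacticIdeal L).add_mem ((syntacticIdeal L).mul_mem_right z h.1) h.2 using 1
    ring
  · exact forall_mem_range.2 fun i => (LatPadic.base.shift i.2).div i.1

theorem LatPadic.preimage_of_congPresPadic {f : ℤ_[p] → ℤ_[p]} (hf : CongPresPadic f)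
    {L : Set ℤ_[p]} (hL : RecognizablePadic L) {X : Set ℤ_[p]} (hX : LatPadic L X) :
    LatPadic L (f ⁻¹' X) := by
  obtain ⟨M, _, _, φ, hφ, T, rfl⟩ := hL
  by_cases htriv : φ ⁻¹' T = ∅ ∨ φ ⁻¹' T = univ
  · rw [hX.eq_self_of_eq_empty_or_univ htriv]
    rcases htriv with h | h <;> simp only [h, preimage_empty, preimage_univ] <;> exact .base
  push Not at htriv
  have := finite_quotient_syntacticIdeal_preimage hφ T
  have hI := latPadic_syntacticIdeal htriv.1
  exact hI.of_isUnionOfCosets (hI.empty_of_ne_top (syntacticIdeal_ne_top htriv.1 htriv.2))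
    ((hX.isUnionOfCosets (isUnionOfCosets_syntacticIdeal _)).preimage_of_congPresPadic hf)

def IsRingCongPadic.ideal {r : ℤ_[p] → ℤ_[p] → Prop} (hr : IsRingCongPadic r) :
    Ideal ℤ_[p] where
  carrier := {z | r z 0}
  add_mem' ha hb := by simpa using hr.2.1 _ _ _ _ ha hb
  zero_mem' := hr.1.refl 0
  smul_mem' c _ hz := by simpa using hr.2.2 _ _ _ _ (hr.1.refl c) hz

theorem IsRingCongPadic.iff_sub_mem {r : ℤ_[p] → ℤ_[p] → Prop} (hr : IsRingCongPadic r)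
    {x y : ℤ_[p]} : r x y ↔ x - y ∈ hr.ideal :=
  ⟨fun h => show r (x - y) 0 by
      simpa [sub_eq_add_neg] using hr.2.1 _ _ _ _ h (hr.1.refl (-y)),
    fun h => by simpa using hr.2.1 _ _ _ _ (show r (x - y) 0 from h) (hr.1.refl y)⟩

theorem PadicInt.finite_quotient_of_ne_bot {I : Ideal ℤ_[p]} (hI : I ≠ ⊥) :
    Finite (ℤ_[p] ⧸ I) := by
  obtain ⟨n, rfl⟩ := PadicInt.ideal_eq_span_pow_p hI
  rw [← PadicInt.ker_toZModPow]
  exact .of_equiv _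
    (RingHom.quotientKerEquivOfSurjective (ZMod.ringHom_surjective _)).symm.toEquiv

theorem map_apply_eq_of_latPadic_preimage {f : ℤ_[p] → ℤ_[p]}
    (H : ∀ L : Set ℤ_[p], RecognizablePadic L →
      ∀ M : Set ℤ_[p], LatPadic L M → LatPadic L (f ⁻¹' M))
    {M : Type} [Ring M] [Finite M] {φ : ℤ_[p] →+* M} (hφ : Function.Surjective φ)
    {x y : ℤ_[p]} (hxy : φ x = φ y) : φ (f x) = φ (f y) := by
  set L := φ ⁻¹' {φ (f x)}
  have hL : IsUnionOfCosets (RingHom.ker φ) L := fun a b h => by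
    rw [RingHom.sub_mem_ker_iff] at h
    simp [L, h]
  have hfL : IsUnionOfCosets (RingHom.ker φ) (f ⁻¹' L) :=
    (H L ⟨M, inferInstance, inferInstance, φ, hφ, _, rfl⟩ L .base).isUnionOfCosets hL
  have hy : y ∈ f ⁻¹' L := (hfL x y ((RingHom.sub_mem_ker_iff φ).2 hxy)).1 rfl
  exact hy.symm

theorem congPresPadic_of_latPadic_preimage {f : ℤ_[p] → ℤ_[p]}
    (H : ∀ L : Set ℤ_[p], RecognizablePadic L →
      ∀ M : Set ℤ_[p], LatPadic L M → LatPadic L (f ⁻¹' M)) :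
    CongPresPadic f := by
  intro r hr x y hxy
  rw [hr.iff_sub_mem] at hxy ⊢
  by_cases hI : hr.ideal = ⊥
  · rw [hI, Ideal.mem_bot, sub_eq_zero] at hxy
    simp [hxy]
  · have := PadicInt.finite_quotient_of_ne_bot hI
    rw [← Ideal.Quotient.eq] at hxy ⊢
    exact map_apply_eq_of_latPadic_preimage H Ideal.Quotient.mk_surjective hxy

end Padic

theorem stmt19 (p : ℕ) [Fact p.Prime] (f : ℤ_[p] → ℤ_[p]) :
    CongPresPadic f ↔
      ∀ L : Set ℤ_[p], RecognizablePadic L →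
        ∀ M : Set ℤ_[p], LatPadic L M → LatPadic L (f ⁻¹' M) :=
  ⟨fun hf _ hL _ hM => hM.preimage_of_congPresPadic hf hL, congPresPadic_of_latPadic_preimage⟩
end
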